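/- arXiv:1908.02348 — 6 statements merged into one kernel-verified Lean document; each statement's English description precedes it below -/
import Mathlib

section
/- For every integer t ≥ 7, the 2-color Ramsey number R(S_t^2, S_t^2) equals 2t - 1; that is, every red/blue edge-coloring of the complete graph on 2t-1 vertices contains a monochromatic copy of S_t^2, and there exists a red/blue edge-coloring of the complete graph on 2t-2 vertices with no monochromatic copy of S_t^2. -/
/-- `SGraph t r` is the graph `S_t^r`: a star `K_{1,t-1}` with center `0`
together with `r` independent edges `(1,2), (3,4), …, (2r-1,2r)` among the leaves. -/
def SGraph (t r : ℕ) : SimpleGraph (Fin t) :=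
  SimpleGraph.fromRel fun a b =>
    a.val = 0 ∨ (b.val = a.val + 1 ∧ a.val % 2 = 1 ∧ b.val ≤ 2 * r)

/-- A monochromatic copy of `H` in the edge-coloring `c` of the complete graph on `V`. -/
def HasMonoCopy {α V C : Type*} (H : SimpleGraph α) (c : Sym2 V → C) : Prop :=
  ∃ (f : α ↪ V) (col : C), ∀ a b : α, H.Adj a b → c s(f a, f b) = col

/-- A copy of `H` in the edge-coloring `c` all of whose edges get color `col`. -/
def HasMonoCopyCol {α V C : Type*} (H : SimpleGraph α) (c : Sym2 V → C) (col : C) : Prop :=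
  ∃ f : α ↪ V, ∀ a b : α, H.Adj a b → c s(f a, f b) = col

/-- A rainbow triangle in the edge-coloring `c` of the complete graph on `V`. -/
def HasRainbowTriangle {V C : Type*} (c : Sym2 V → C) : Prop :=
  ∃ x y z : V,
    c s(x, y) ≠ c s(y, z) ∧ c s(y, z) ≠ c s(x, z) ∧ c s(x, y) ≠ c s(x, z)

/-!
Write `G` for the graph of red edges. If a vertex `v` has red degree at least `t - 1`, its red
neighbourhood cannot contain two disjoint red edges (they would complete a red `S_t^2` centred
at `v`), so after deleting at most two vertices it is a blue clique. A vertex of a blue clique of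
size at least `5` therefore has blue degree at most `t - 2`, and a blue `K₄` cannot have all its
blue degrees `≥ t - 1`, since the blue neighbourhoods of its vertices outside the `K₄` would be
pairwise disjoint. Combining these, some vertex has red degree at least `t`, and iterating the
first step yields two disjoint blue cliques `X`, `Y` of size `t - 2`, each of whose vertices has
at most one blue neighbour outside its clique. Double counting the red
edges from `X ∪ Y` to the three remaining vertices yields a vertex `w` with at least two red
neighbours in each clique and at least `t - 1` in total; `w` is then the centre of a red
`S_t^2` whose two triangles use red edges between `X` and `Y`.

For the lower bound, colour the edges inside two disjoint `(t - 1)`-sets red and the edges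
between them blue: red components are too small and the blue graph is bipartite.
-/

open Finset SimpleGraph

theorem SimpleGraph.degree_add_degree_compl {V : Type*} [Fintype V] [DecidableEq V]
    (G : SimpleGraph V) [DecidableRel G.Adj] (v : V) :
    G.degree v + Gᶜ.degree v = Fintype.card V - 1 := by
  have := G.degree_lt_card_verts v
  rw [degree_compl]
  omega

theorem SimpleGraph.card_mul_le_sum_card_filter_adj {V : Type*} {G : SimpleGraph V}
    [DecidableRel G.Adj] {X W : Finset V} {m : ℕ}
    (hX : ∀ x ∈ X, (W.filter (fun w => ¬ G.Adj x w)).card ≤ m) :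
    X.card * (W.card - m) ≤ ∑ w ∈ W, (X.filter (G.Adj w)).card := by
  have hcount := sum_card_bipartiteAbove_eq_sum_card_bipartiteBelow G.Adj (s := W) (t := X)
  simp only [bipartiteAbove, bipartiteBelow] at hcount
  rw [hcount, ← smul_eq_mul]
  refine card_nsmul_le_sum _ _ _ fun x hx => ?_
  have := card_filter_add_card_filter_not (s := W) (fun w => G.Adj x w)
  have := hX x hx
  simp only [G.adj_comm _ x]
  omega

namespace SGraph

variable {V : Type*} [Fintype V] [DecidableEq V] {G : SimpleGraph V} [DecidableRel G.Adj]
  {t : ℕ}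

theorem isContained_of_disjoint_edges (ht : 5 ≤ t) {w a₁ a₂ b₁ b₂ : V}
    (hw : t - 1 ≤ G.degree w) (ha₁ : G.Adj w a₁) (ha₂ : G.Adj w a₂) (hb₁ : G.Adj w b₁)
    (hb₂ : G.Adj w b₂) (ha : G.Adj a₁ a₂) (hb : G.Adj b₁ b₂)
    (h₁₁ : a₁ ≠ b₁) (h₁₂ : a₁ ≠ b₂) (h₂₁ : a₂ ≠ b₁) (h₂₂ : a₂ ≠ b₂) :
    SGraph t 2 ⊑ G := by
  obtain ⟨s, rfl⟩ : ∃ s, t = s + 5 := ⟨t - 5, by omega⟩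
  have hS : s ≤ (G.neighborFinset w \ {a₁, a₂, b₁, b₂}).card := by
    have := le_card_sdiff {a₁, a₂, b₁, b₂} (G.neighborFinset w)
    have := card_le_four (a := a₁) (b := a₂) (c := b₁) (d := b₂)
    rw [card_neighborFinset_eq_degree] at *
    omega
  obtain ⟨g⟩ := Function.Embedding.nonempty_of_card_le (α := Fin s)
    (β := ↥(G.neighborFinset w \ {a₁, a₂, b₁, b₂})) (by rwa [Fintype.card_fin, Fintype.card_coe])
  have hg : ∀ i, (g i : V) ∈ G.neighborFinset w \ {a₁, a₂, b₁, b₂} := fun i => (g i).2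
  simp only [mem_sdiff, mem_neighborFinset, mem_insert, mem_singleton, not_or] at hg
  let f : Fin (s + 5) → V :=
    Fin.cons w (Fin.cons a₁ (Fin.cons a₂ (Fin.cons b₁ (Fin.cons b₂ (fun i => (g i : V))))))
  have hf : Function.Injective f := by
    simp only [f, Fin.cons_injective_iff, Fin.range_cons, Set.mem_insert_iff, Set.mem_range,
      not_or, not_exists]
    exact ⟨⟨ha₁.ne, ha₂.ne, hb₁.ne, hb₂.ne, fun i => (hg i).1.ne'⟩,
      ⟨ha.ne, h₁₁, h₁₂, fun i => (hg i).2.1⟩, ⟨h₂₁, h₂₂, fun i => (hg i).2.2.1⟩,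
      ⟨hb.ne, fun i => (hg i).2.2.2.1⟩, fun i => (hg i).2.2.2.2,
      Subtype.val_injective.comp g.injective⟩
  have hstar : ∀ j : Fin (s + 4), G.Adj w (f j.succ) := by
    simp only [f, Fin.forall_fin_succ, Fin.cons_succ, Fin.cons_zero]
    exact ⟨ha₁, ha₂, hb₁, hb₂, fun i => (hg i).1⟩
  suffices hadj : ∀ a b : Fin (s + 5), a ≠ b →
      (a.val = 0 ∨ (b.val = a.val + 1 ∧ a.val % 2 = 1 ∧ b.val ≤ 2 * 2)) → G.Adj (f a) (f b) by
    refine ⟨⟨⟨f, fun {a b} h => ?_⟩, hf⟩⟩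
    rw [SGraph, fromRel_adj] at h
    obtain ⟨hne, h | h⟩ := h
    exacts [hadj a b hne h, (hadj b a hne.symm h).symm]
  rintro ⟨i, hi⟩ ⟨j, hj⟩ hij (h0 | ⟨rfl, hodd, hle⟩)
  · obtain rfl : i = 0 := h0
    obtain ⟨k, hk⟩ := Fin.exists_succ_eq.mpr hij.symm
    rw [← hk]
    exact hstar k
  · obtain rfl | rfl : i = 1 ∨ i = 3 := by simp only at hodd hle; omega
    exacts [ha, hb]

theorem isContained_of_isClique_four (ht : 5 ≤ t) {w : V} {K : Finset V}
    (hw : t - 1 ≤ G.degree w) (hK : G.IsClique (K : Set V)) (hKw : ∀ k ∈ K, G.Adj w k)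
    (hK4 : 4 ≤ K.card) : SGraph t 2 ⊑ G := by
  obtain ⟨a₁, ha₁, a₂, ha₂, ha⟩ := one_lt_card.mp (show 1 < K.card by omega)
  have hrest : 1 < (K \ {a₁, a₂}).card := by
    have := le_card_sdiff {a₁, a₂} K
    have := card_le_two (a := a₁) (b := a₂)
    omega
  obtain ⟨b₁, hb₁, b₂, hb₂, hb⟩ := one_lt_card.mp hrest
  simp only [mem_sdiff, mem_insert, mem_singleton, not_or] at hb₁ hb₂
  exact isContained_of_disjoint_edges ht hw (hKw _ ha₁) (hKw _ ha₂) (hKw _ hb₁.1) (hKw _ hb₂.1)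
    (hK ha₁ ha₂ ha) (hK hb₁.1 hb₂.1 hb) (Ne.symm hb₁.2.1) (Ne.symm hb₂.2.1) (Ne.symm hb₁.2.2)
    (Ne.symm hb₂.2.2)

theorem isContained_of_nearly_complete_between (ht : 5 ≤ t) {w : V} {X Y : Finset V}
    (hw : t - 1 ≤ G.degree w) (hXY : Disjoint X Y)
    (hX : ∀ x ∈ X, (Y.filter (fun y => ¬ G.Adj x y)).card ≤ 1)
    (hXw : 2 ≤ (X.filter (G.Adj w)).card) (hYw : 3 ≤ (Y.filter (G.Adj w)).card) :
    SGraph t 2 ⊑ G := by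
  obtain ⟨x₁, hx₁, x₂, hx₂, hx⟩ := one_lt_card.mp hXw
  rw [mem_filter] at hx₁ hx₂
  have hY : ∀ x ∈ X, 1 < ((Y.filter (G.Adj w)).filter (G.Adj x)).card := by
    intro x hx
    have := card_filter_add_card_filter_not (s := Y.filter (G.Adj w)) (G.Adj x)
    have := card_le_card (filter_subset_filter (fun y => ¬ G.Adj x y) (filter_subset (G.Adj w) Y))
    have := hX x hx
    omega
  obtain ⟨y₁, hy₁⟩ := card_pos.mp (zero_lt_one.trans (hY x₁ hx₁.1))
  obtain ⟨y₂, hy₂, hy⟩ := exists_mem_ne (hY x₂ hx₂.1) y₁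
  simp only [mem_filter] at hy₁ hy₂
  exact isContained_of_disjoint_edges ht hw hx₁.2 hy₁.1.2 hx₂.2 hy₂.1.2 hy₁.2 hy₂.2 hx
    (ne_of_mem_of_not_mem hy₂.1.1 (disjoint_left.mp hXY hx₁.1)).symm
    (ne_of_mem_of_not_mem hy₁.1.1 (disjoint_left.mp hXY hx₂.1)) hy.symm

theorem degree_le_of_mem_isClique (hG : ¬ SGraph t 2 ⊑ G) (ht : 5 ≤ t) {C : Finset V} {x : V}
    (hC : G.IsClique (C : Set V)) (hC5 : 5 ≤ C.card) (hx : x ∈ C) : G.degree x ≤ t - 2 := by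
  by_contra! hdeg
  refine hG (isContained_of_isClique_four ht (w := x) (K := C.erase x) (by omega)
    (hC.subset (by simp)) (fun k hk => ?_) (by rw [card_erase_of_mem hx]; omega))
  obtain ⟨hkx, hk⟩ := mem_erase.mp hk
  exact hC hx hk hkx.symm

theorem exists_isClique_compl_of_degree (hG : ¬ SGraph t 2 ⊑ G) (ht : 5 ≤ t) {v : V}
    (hv : t - 1 ≤ G.degree v) :
    ∃ C ⊆ G.neighborFinset v, G.degree v ≤ C.card + 2 ∧ Gᶜ.IsClique (C : Set V) := by
  by_cases hE : ∃ p q, G.Adj v p ∧ G.Adj v q ∧ G.Adj p q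
  · obtain ⟨p, q, hp, hq, hpq⟩ := hE
    refine ⟨G.neighborFinset v \ {p, q}, sdiff_subset, ?_, fun x hx y hy hxy => ?_⟩
    · have := le_card_sdiff {p, q} (G.neighborFinset v)
      have := card_le_two (a := p) (b := q)
      rw [card_neighborFinset_eq_degree] at *
      omega
    · simp only [coe_sdiff, Set.mem_sdiff, mem_coe, mem_neighborFinset, mem_insert,
        mem_singleton, not_or] at hx hy
      refine ⟨hxy, fun hxy' => hG ?_⟩
      exact isContained_of_disjoint_edges ht hv hp hq hx.1 hy.1 hpq hxy' (Ne.symm hx.2.1)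
        (Ne.symm hy.2.1) (Ne.symm hx.2.2) (Ne.symm hy.2.2)
  · push Not at hE
    refine ⟨G.neighborFinset v, subset_rfl, by simp, fun x hx y hy hxy => ⟨hxy, ?_⟩⟩
    simp only [coe_neighborFinset, mem_neighborSet] at hx hy
    exact hE x y hx hy

theorem exists_degree_lt_of_isNClique_four (hG : ¬ SGraph t 2 ⊑ G)
    (hV : Fintype.card V = 2 * t - 1) (ht : 6 ≤ t) {Q : Finset V} (hQ : G.IsNClique 4 Q) :
    ∃ q ∈ Q, G.degree q < t - 1 := by
  by_contra! hdeg
  have hdisj : ∀ q ∈ Q, ∀ q' ∈ Q, q ≠ q' →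
      Disjoint (G.neighborFinset q \ Q) (G.neighborFinset q' \ Q) := by
    intro q hq q' hq' hne
    -- a common neighbour `x ∉ Q` of `q` and `q'` gives a copy centred at `q` with edges
    -- `x q'` and `r s`, where `Q = {q, q', r, s}`
    refine disjoint_left.mpr fun x hx hx' => hG ?_
    simp only [mem_sdiff, mem_neighborFinset] at hx hx'
    have hrest : (Q \ {q, q'}).card = 2 := by
      rw [card_sdiff_of_subset (by simp [insert_subset_iff, hq, hq']), hQ.card_eq, card_pair hne]
    obtain ⟨r, s, hrs, hQrs⟩ := card_eq_two.mp hrest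
    have hr : r ∈ Q \ {q, q'} := by simp [hQrs]
    have hs : s ∈ Q \ {q, q'} := by simp [hQrs]
    simp only [mem_sdiff, mem_insert, mem_singleton, not_or] at hr hs
    exact isContained_of_disjoint_edges (by omega) (hdeg q hq) hx.1 (hQ.isClique hq hq' hne)
      (hQ.isClique hq hr.1 (Ne.symm hr.2.1)) (hQ.isClique hq hs.1 (Ne.symm hs.2.1))
      hx'.1.symm (hQ.isClique hr.1 hs.1 hrs) (ne_of_mem_of_not_mem hr.1 hx.2).symm
      (ne_of_mem_of_not_mem hs.1 hx.2).symm (Ne.symm hr.2.2) (Ne.symm hs.2.2)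
  have hlarge : ∀ q ∈ Q, t - 4 ≤ (G.neighborFinset q \ Q).card := by
    intro q hq
    have hQq : G.neighborFinset q ∩ Q ⊆ Q.erase q := fun u hu => by
      simp only [mem_inter, mem_neighborFinset] at hu
      exact mem_erase.mpr ⟨hu.1.ne', hu.2⟩
    have := card_le_card hQq
    have := card_sdiff_add_card_inter (G.neighborFinset q) Q
    rw [card_erase_of_mem hq, hQ.card_eq, card_neighborFinset_eq_degree] at *
    have := hdeg q hq
    omega
  have hsum : ∑ q ∈ Q, (G.neighborFinset q \ Q).card ≤ Qᶜ.card := by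
    rw [← card_biUnion hdisj]
    exact card_le_card (biUnion_subset.mpr fun q _ => by simp [subset_iff])
  have := card_nsmul_le_sum Q _ _ hlarge
  rw [card_compl, hV, hQ.card_eq, smul_eq_mul] at *
  omega

theorem card_filter_not_adj_le_one (hGc : ¬ SGraph t 2 ⊑ Gᶜ) (ht : 7 ≤ t) {X : Finset V}
    {x : V} (hX : Gᶜ.IsClique (X : Set V)) (hXc : X.card = t - 2) (hx : x ∈ X) :
    (Xᶜ.filter (fun u => ¬ G.Adj x u)).card ≤ 1 := by
  have hdeg := degree_le_of_mem_isClique hGc (by omega) hX (by omega) hx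
  have hsub : Xᶜ.filter (fun u => ¬ G.Adj x u) ∪ X.erase x ⊆ Gᶜ.neighborFinset x := by
    intro u hu
    rw [mem_neighborFinset]
    rcases mem_union.mp hu with hu | hu
    · simp only [mem_filter, mem_compl] at hu
      exact ⟨ne_of_mem_of_not_mem hx hu.1, hu.2⟩
    · obtain ⟨hux, hu⟩ := mem_erase.mp hu
      exact hX hx hu hux.symm
  have := card_le_card hsub
  rw [card_union_of_disjoint (disjoint_left.mpr fun u hu hu' =>
    (mem_compl.mp (mem_filter.mp hu).1) (mem_erase.mp hu').2), card_erase_of_mem hx,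
    card_neighborFinset_eq_degree] at this
  omega

theorem false_of_disjoint_isClique_compl (hG : ¬ SGraph t 2 ⊑ G) (hGc : ¬ SGraph t 2 ⊑ Gᶜ)
    (hV : Fintype.card V = 2 * t - 1) (ht : 7 ≤ t) {X Y : Finset V} (hXY : Disjoint X Y)
    (hX : Gᶜ.IsClique (X : Set V)) (hY : Gᶜ.IsClique (Y : Set V)) (hXc : X.card = t - 2)
    (hYc : Y.card = t - 2) : False := by
  have hXout := fun x hx => card_filter_not_adj_le_one hGc ht hX hXc (x := x) hx
  have hYout := fun y hy => card_filter_not_adj_le_one hGc ht hY hYc (x := y) hy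
  set W := (X ∪ Y)ᶜ
  have hW : W.card = 3 := by
    rw [card_compl, card_union_of_disjoint hXY, hV]
    omega
  have hXW : ∀ x ∈ X, (W.filter (fun w => ¬ G.Adj x w)).card ≤ 1 := fun x hx =>
    (card_le_card (filter_subset_filter _ (compl_subset_compl.mpr subset_union_left))).trans
      (hXout x hx)
  have hYW : ∀ y ∈ Y, (W.filter (fun w => ¬ G.Adj y w)).card ≤ 1 := fun y hy =>
    (card_le_card (filter_subset_filter _ (compl_subset_compl.mpr subset_union_right))).trans
      (hYout y hy)
  have hsumX := card_mul_le_sum_card_filter_adj hXW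
  have hsumY := card_mul_le_sum_card_filter_adj hYW
  obtain ⟨w, -, hXw, hYw, hXYw⟩ : ∃ w ∈ W, 2 ≤ (X.filter (G.Adj w)).card ∧
      2 ≤ (Y.filter (G.Adj w)).card ∧
      t - 1 ≤ (X.filter (G.Adj w)).card + (Y.filter (G.Adj w)).card := by
    -- otherwise `4 (t - 2) ≤ ∑ w ∈ W, (…) ≤ 3 (t - 1)`
    by_contra! hbad
    have hle : ∀ w ∈ W, (X.filter (G.Adj w)).card + (Y.filter (G.Adj w)).card ≤ t - 1 := by
      intro w hw
      have := card_filter_le X (G.Adj w)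
      have := card_filter_le Y (G.Adj w)
      have := hbad w hw
      omega
    have := sum_le_card_nsmul W _ _ hle
    rw [sum_add_distrib, smul_eq_mul] at this
    rw [hW, hXc] at hsumX
    rw [hW, hYc] at hsumY
    rw [hW] at this
    omega
  have hdeg : (X.filter (G.Adj w)).card + (Y.filter (G.Adj w)).card ≤ G.degree w := by
    rw [← card_union_of_disjoint (disjoint_filter_filter hXY), ← filter_union,
      ← card_neighborFinset_eq_degree]
    exact card_le_card fun u hu => (G.mem_neighborFinset _ _).mpr (mem_filter.mp hu).2
  have hXY' : ∀ x ∈ X, (Y.filter (fun y => ¬ G.Adj x y)).card ≤ 1 := fun x hx =>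
    (card_le_card (filter_subset_filter _ (subset_compl_iff_disjoint_right.mpr hXY.symm))).trans
      (hXout x hx)
  have hYX' : ∀ y ∈ Y, (X.filter (fun x => ¬ G.Adj y x)).card ≤ 1 := fun y hy =>
    (card_le_card (filter_subset_filter _ (subset_compl_iff_disjoint_right.mpr hXY))).trans
      (hYout y hy)
  rcases le_or_gt 3 (Y.filter (G.Adj w)).card with h | h
  · exact hG (isContained_of_nearly_complete_between (by omega) (by omega) hXY hXY' hXw h)
  · exact hG (isContained_of_nearly_complete_between (by omega) (by omega) hXY.symm hYX' hYw
      (by omega))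

theorem false_of_le_degree (hG : ¬ SGraph t 2 ⊑ G) (hGc : ¬ SGraph t 2 ⊑ Gᶜ)
    (hV : Fintype.card V = 2 * t - 1) (ht : 7 ≤ t) {v : V} (hv : t - 1 ≤ G.degree v) : False := by
  have hcompl : ∀ u, G.degree u + Gᶜ.degree u = 2 * t - 2 := fun u => by
    rw [degree_add_degree_compl, hV]
    omega
  obtain ⟨C, -, hCc, hC⟩ := exists_isClique_compl_of_degree hG (by omega) hv
  obtain ⟨Q, hQC, hQc⟩ := exists_subset_card_eq (show 4 ≤ C.card by omega)
  obtain ⟨u₀, -, hu₀⟩ :=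
    exists_degree_lt_of_isNClique_four hGc hV (by omega) ⟨hC.subset (by simpa), hQc⟩
  have hu₀deg := hcompl u₀
  obtain ⟨X, hXu₀, hXc, hX⟩ :=
    exists_isClique_compl_of_degree hG (by omega) (show t - 1 ≤ G.degree u₀ by omega)
  obtain ⟨u₁, hu₁⟩ : X.Nonempty := card_pos.mp (by omega)
  have hu₁deg := hcompl u₁
  have hu₁deg' := degree_le_of_mem_isClique hGc (by omega) hX (by omega) hu₁
  obtain ⟨Y, hYu₁, hYc, hY⟩ :=
    exists_isClique_compl_of_degree hG (by omega) (show t - 1 ≤ G.degree u₁ by omega)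
  have hXY : Disjoint X Y := by
    refine disjoint_left.mpr fun x hx hxY => ?_
    have hu₁x : G.Adj u₁ x := (G.mem_neighborFinset _ _).mp (hYu₁ hxY)
    exact (hX hu₁ hx hu₁x.ne).2 hu₁x
  obtain ⟨X', hX'X, hX'c⟩ := exists_subset_card_eq (show t - 2 ≤ X.card by omega)
  obtain ⟨Y', hY'Y, hY'c⟩ := exists_subset_card_eq (show t - 2 ≤ Y.card by omega)
  exact false_of_disjoint_isClique_compl hG hGc hV ht (hXY.mono hX'X hY'Y)
    (hX.subset (by simpa)) (hY.subset (by simpa)) hX'c hY'c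

theorem isContained_or_isContained_compl
    (hV : Fintype.card V = 2 * t - 1) (ht : 7 ≤ t) : SGraph t 2 ⊑ G ∨ SGraph t 2 ⊑ Gᶜ := by
  refine or_iff_not_imp_left.mpr fun hG => ?_
  by_contra hGc
  obtain ⟨v⟩ : Nonempty V := Fintype.card_pos_iff.mp (by omega)
  have := G.degree_add_degree_compl v
  rcases le_or_gt (t - 1) (G.degree v) with hv | hv
  · exact false_of_le_degree hG hGc hV ht hv
  · exact false_of_le_degree (G := Gᶜ) (v := v) hGc (by rwa [compl_compl]) hV ht (by omega)

end SGraph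

theorem hasMonoCopy_of_isContained {α V C : Type*} {H : SimpleGraph α} {G : SimpleGraph V}
    {c : Sym2 V → C} {k : C} (hG : ∀ u v, G.Adj u v → c s(u, v) = k) (h : H ⊑ G) :
    HasMonoCopy H c := by
  obtain ⟨f⟩ := h
  exact ⟨f.toEmbedding, k, fun a b hab => hG _ _ (f.toHom.map_adj hab)⟩

def splitColoring {V : Type*} (p : V → Prop) [DecidablePred p] : Sym2 V → Fin 2 :=
  Sym2.lift ⟨fun u v => if (p u ↔ p v) then 0 else 1, fun u v => by simp only [iff_comm]⟩

theorem not_hasMonoCopy_splitColoring {V : Type*} [Fintype V] (p : V → Prop) [DecidablePred p]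
    {t : ℕ} (ht : 3 ≤ t) (hp : #{v | p v} < t) (hnp : #{v | ¬ p v} < t) :
    ¬ HasMonoCopy (SGraph t 2) (splitColoring p) := by
  rintro ⟨f, col, hf⟩
  let x₀ : Fin t := ⟨0, by omega⟩
  let x₁ : Fin t := ⟨1, by omega⟩
  let x₂ : Fin t := ⟨2, by omega⟩
  have hstar : ∀ j, j ≠ x₀ → (SGraph t 2).Adj x₀ j := fun j hj => by
    simp [SGraph, fromRel_adj, x₀, Ne.symm hj]
  have hadj₁₂ : (SGraph t 2).Adj x₁ x₂ := by simp [SGraph, fromRel_adj, x₁, x₂]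
  have hcol : ∀ a b, (SGraph t 2).Adj a b → ((p (f a) ↔ p (f b)) ↔ col = 0) := by
    intro a b hab
    have := hf a b hab
    simp only [splitColoring, Sym2.lift_mk] at this
    split_ifs at this with h <;> subst this <;> simp [h]
  by_cases hred : col = 0
  · have hside : ∀ j, (p (f j) ↔ p (f x₀)) := fun j => by
      rcases eq_or_ne j x₀ with rfl | hj
      · rfl
      · exact ((hcol _ _ (hstar j hj)).mpr hred).symm
    have hmap : univ.map f ⊆ univ.filter (fun v => p v ↔ p (f x₀)) := by
      intro v hv
      obtain ⟨j, -, rfl⟩ := mem_map.mp hv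
      simpa using hside j
    have := card_le_card hmap
    by_cases h : p (f x₀) <;> simp [h] at this <;> omega
  · have h₀₁ := (hcol _ _ (hstar x₁ (by simp [x₀, x₁]))).not.mpr hred
    have h₀₂ := (hcol _ _ (hstar x₂ (by simp [x₀, x₂]))).not.mpr hred
    have h₁₂ := (hcol _ _ hadj₁₂).not.mpr hred
    tauto

theorem ramsey_St2 (t : ℕ) (ht : 7 ≤ t) :
    (∀ c : Sym2 (Fin (2 * t - 1)) → Fin 2, HasMonoCopy (SGraph t 2) c) ∧
    (∃ c : Sym2 (Fin (2 * t - 2)) → Fin 2, ¬ HasMonoCopy (SGraph t 2) c) := by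
  classical
  refine ⟨fun c => ?_, ⟨splitColoring (fun i : Fin (2 * t - 2) => i.val < t - 1), ?_⟩⟩
  · let G := SimpleGraph.fromEdgeSet {e | c e = 0}
    rcases SGraph.isContained_or_isContained_compl (G := G) (by simp) ht with h | h
    · exact hasMonoCopy_of_isContained (G := G) (fun u v huv => huv.1) h
    · exact hasMonoCopy_of_isContained (G := Gᶜ)
        (fun u v huv => Fin.eq_one_of_ne_zero _ fun h => huv.2 ⟨h, huv.1⟩) h
  · have hsplit := card_filter_add_card_filter_not (s := (univ : Finset (Fin (2 * t - 2))))
      (fun i => i.val < t - 1)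
    rw [Fin.card_filter_val_lt, card_univ, Fintype.card_fin] at hsplit
    exact not_hasMonoCopy_splitColoring _ (by omega) (by rw [Fin.card_filter_val_lt]; omega)
      (by omega)
end

section
/- For every integer t ≥ 15, the 2-color Ramsey number R(S_t^3, S_t^3) equals 2t - 1. -/
/-
Upper bound. Let `G` be one colour class on `2t - 1` vertices and `Gᶜ` the other, and suppose
neither contains `S_t^3`. A vertex of `G`-degree at least `t - 1` whose neighbourhood holds three
disjoint `G`-edges is the centre of an `S_t^3`; so the `G`-edges in such a neighbourhood have a
vertex cover of at most four vertices, and the rest of the neighbourhood is a `Gᶜ`-clique. A vertex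
of a `Gᶜ`-clique with at least seven vertices has `Gᶜ`-degree at most `t - 2`, hence `G`-degree at
least `t`. So a vertex `u` of such a clique has a `Gᶜ`-clique `S ⊆ N(u)` with `|S| ≥ t - 4`, a
vertex `w ∈ S` has one, `S' ⊆ N(w)`, as well, and `S`, `S'` are disjoint because `S` is
`G`-independent. Every other vertex `z` is `Gᶜ`-adjacent to all but two vertices of `S` or of `S'`:
otherwise the `G`-neighbourhood of `z` contains most of one clique and three vertices of the other,
which are joined by three disjoint `G`-edges. Double counting the few `Gᶜ`-edges leaving `S` and
`S'` then leaves room for at most `2t - 2 - |S| - |S'|` such vertices, one too few.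

Lower bound. Colour the edges inside two halves of size `t - 1` with one colour and the edges
between them with the other: the first colour class has no vertex of degree `t - 1` and the second
is bipartite, while `S_t^3` has a vertex of degree `t - 1` and a triangle.
-/

open Finset SimpleGraph

namespace SimpleGraph

variable {V : Type*} [DecidableEq V] {G : SimpleGraph V}

def HasMatchingIn (G : SimpleGraph V) : ℕ → Finset V → Prop
  | 0, _ => True
  | k + 1, N => ∃ p ∈ N, ∃ q ∈ N, G.Adj p q ∧ G.HasMatchingIn k (N \ {p, q})

theorem HasMatchingIn.mono {k : ℕ} {N N' : Finset V} (h : G.HasMatchingIn k N) (hN : N ⊆ N') :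
    G.HasMatchingIn k N' := by
  induction k generalizing N N' with
  | zero => trivial
  | succ k ih =>
    obtain ⟨p, hp, q, hq, hpq, h⟩ := h
    exact ⟨p, hN hp, q, hN hq, hpq, ih h (sdiff_subset_sdiff hN le_rfl)⟩

theorem hasMatchingIn_of_isClique {k : ℕ} {K : Finset V} (hK : G.IsClique (K : Set V))
    (hcard : 2 * k ≤ #K) : G.HasMatchingIn k K := by
  induction k generalizing K with
  | zero => trivial
  | succ k ih =>
    obtain ⟨p, hp, q, hq, hpq⟩ := one_lt_card.mp (by omega : 1 < #K)
    refine ⟨p, hp, q, hq, hK hp hq hpq, ih (hK.subset (by simp)) ?_⟩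
    rw [card_sdiff_of_subset (by simp [insert_subset_iff, hp, hq]), card_pair hpq]
    omega

theorem exists_compl_isClique_of_not_hasMatchingIn {k : ℕ} {N : Finset V}
    (h : ¬ G.HasMatchingIn (k + 1) N) :
    ∃ K ⊆ N, #N ≤ #K + 2 * k ∧ Gᶜ.IsClique (K : Set V) := by
  by_cases hedge : ∃ p ∈ N, ∃ q ∈ N, G.Adj p q
  · obtain ⟨p, hp, q, hq, hpq⟩ := hedge
    cases k with
    | zero => exact absurd ⟨p, hp, q, hq, hpq, trivial⟩ h
    | succ k =>
      obtain ⟨K, hKN, hcard, hK⟩ := exists_compl_isClique_of_not_hasMatchingIn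
        (k := k) (N := N \ {p, q}) fun h' => h ⟨p, hp, q, hq, hpq, h'⟩
      refine ⟨K, hKN.trans sdiff_subset, ?_, hK⟩
      have := le_card_sdiff {p, q} N
      have := card_le_two (a := p) (b := q)
      omega
  · push Not at hedge
    exact ⟨N, subset_rfl, by omega, fun a ha b hb hab => (compl_adj G a b).mpr ⟨hab, hedge a ha b hb⟩⟩

variable [Fintype V] [DecidableRel G.Adj]

theorem hasMatchingIn_union_of_forall_le_card_inter {k : ℕ} {A B : Finset V}
    (hAB : Disjoint A B) (hB : k ≤ #B) (hnbr : ∀ y ∈ B, k ≤ #(A ∩ G.neighborFinset y)) :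
    G.HasMatchingIn k (A ∪ B) := by
  induction k generalizing A B with
  | zero => trivial
  | succ k ih =>
    obtain ⟨y, hy⟩ := card_pos.mp (by omega : 0 < #B)
    obtain ⟨x, hx⟩ := card_pos.mp (by have := hnbr y hy; omega : 0 < #(A ∩ G.neighborFinset y))
    rw [mem_inter, mem_neighborFinset] at hx
    refine ⟨x, mem_union_left _ hx.1, y, mem_union_right _ hy, hx.2.symm, ?_⟩
    refine (ih (A := A.erase x) (B := B.erase y) ?_ ?_ ?_).mono ?_
    · exact hAB.mono (erase_subset _ _) (erase_subset _ _)
    · have := pred_card_le_card_erase (s := B) (a := y); omega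
    · intro y' hy'
      have h1 := hnbr y' (mem_of_mem_erase hy')
      have h2 : (A ∩ G.neighborFinset y').erase x ⊆ A.erase x ∩ G.neighborFinset y' := by
        intro w hw; simp only [mem_erase, mem_inter] at hw ⊢; tauto
      have := card_le_card h2
      have := pred_card_le_card_erase (s := A ∩ G.neighborFinset y') (a := x)
      omega
    · have hxB : x ∉ B := Finset.disjoint_left.mp hAB hx.1
      have hyA : y ∉ A := Finset.disjoint_right.mp hAB hy
      intro w hw
      simp only [mem_union, mem_erase, mem_sdiff, mem_insert, mem_singleton] at hw ⊢
      rcases hw with ⟨hwx, hwA⟩ | ⟨hwy, hwB⟩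
      · exact ⟨Or.inl hwA, by rintro (rfl | rfl) <;> contradiction⟩
      · exact ⟨Or.inr hwB, by rintro (rfl | rfl) <;> contradiction⟩

theorem degree_add_degree_compl_s1 (v : V) : G.degree v + Gᶜ.degree v = Fintype.card V - 1 := by
  have := G.degree_lt_card_verts v
  rw [degree_compl]
  omega

theorem card_le_card_inter_neighborFinset_add_compl {A : Finset V} {z : V} (hz : z ∉ A) :
    #A ≤ #(A ∩ G.neighborFinset z) + #(A ∩ Gᶜ.neighborFinset z) := by
  have hsub : A \ G.neighborFinset z ⊆ A ∩ Gᶜ.neighborFinset z := by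
    intro w hw
    rw [mem_sdiff, mem_neighborFinset] at hw
    rw [mem_inter, mem_neighborFinset, compl_adj]
    exact ⟨hw.1, fun h => hz (h ▸ hw.1), hw.2⟩
  have := card_inter_add_card_sdiff A (G.neighborFinset z)
  have := card_le_card hsub
  omega

end SimpleGraph

namespace SGraph

theorem isContained_of_list {V : Type*} {G : SimpleGraph V} {r : ℕ} {x : V} {l : List V}
    (hl : l.Nodup) (hx : x ∉ l) (hstar : ∀ y ∈ l, G.Adj x y)
    (hpairs : ∀ (i : ℕ) (hi : i + 1 < l.length), i % 2 = 0 → i + 2 ≤ 2 * r → G.Adj l[i] l[i + 1]) :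
    SGraph (l.length + 1) r ⊑ G := by
  let f : Fin (l.length + 1) → V := Fin.cons x l.get
  have hf : Function.Injective f := Fin.cons_injective_iff.mpr
    ⟨by simpa [List.mem_iff_get] using hx, List.nodup_iff_injective_get.mp hl⟩
  have hadj : ∀ a b : Fin (l.length + 1),
      (a : ℕ) = 0 ∨ ((b : ℕ) = a + 1 ∧ (a : ℕ) % 2 = 1 ∧ (b : ℕ) ≤ 2 * r) →
      a ≠ b → G.Adj (f a) (f b) := by
    intro a b hab hne
    rcases hab with ha | ⟨hb, ha, hbr⟩
    · obtain rfl : a = 0 := Fin.ext ha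
      obtain ⟨b, rfl⟩ := Fin.exists_succ_eq.mpr hne.symm
      exact hstar _ (List.get_mem _ _)
    · obtain ⟨a, rfl⟩ := Fin.exists_succ_eq.mpr (Fin.ne_of_val_ne (by omega : (a : ℕ) ≠ 0))
      obtain ⟨b, rfl⟩ := Fin.exists_succ_eq.mpr (Fin.ne_of_val_ne (by omega : (b : ℕ) ≠ 0))
      simp only [Fin.val_succ] at hb ha hbr
      have := hpairs a (by omega) (by omega) (by omega)
      simpa [f, show (b : ℕ) = a + 1 by omega] using this
  refine ⟨⟨⟨f, fun {a b} hab => ?_⟩, hf⟩⟩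
  obtain ⟨hne, hab | hba⟩ := (fromRel_adj _ a b).mp hab
  · exact hadj a b hab hne
  · exact (hadj b a hba hne.symm).symm

variable {V : Type*} [Fintype V] [DecidableEq V] {G : SimpleGraph V} [DecidableRel G.Adj] {t : ℕ}

theorem isContained_of_hasMatchingIn {x : V} (ht : 7 ≤ t) (hdeg : t - 1 ≤ G.degree x)
    (hM : G.HasMatchingIn 3 (G.neighborFinset x)) : SGraph t 3 ⊑ G := by
  obtain ⟨p₁, hp₁, q₁, hq₁, h₁, p₂, hp₂, q₂, hq₂, h₂, p₃, hp₃, q₃, hq₃, h₃, -⟩ := hM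
  simp only [mem_sdiff, mem_insert, mem_singleton, not_or] at hp₂ hq₂ hp₃ hq₃
  set M := [p₁, q₁, p₂, q₂, p₃, q₃]
  have hMnodup : M.Nodup := by
    have := G.ne_of_adj h₁; have := G.ne_of_adj h₂; have := G.ne_of_adj h₃
    simp only [M, List.nodup_cons, List.mem_cons, List.not_mem_nil, or_false, not_or,
      List.nodup_nil, and_true]
    grind
  have hMN : M.toFinset ⊆ G.neighborFinset x := by
    intro y hy
    simp only [M, List.toFinset_cons, List.toFinset_nil, mem_insert] at hy
    grind
  obtain ⟨R, hR, hRcard⟩ := exists_subset_card_eq (s := G.neighborFinset x \ M.toFinset)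
    (n := t - 7) (by
      have := le_card_sdiff M.toFinset (G.neighborFinset x)
      rw [List.toFinset_card_of_nodup hMnodup, card_neighborFinset_eq_degree] at this
      exact le_trans (by simp only [M, List.length_cons, List.length_nil]; omega) this)
  have hlen : t = (M ++ R.toList).length + 1 := by simp [M, hRcard]; omega
  have hstar : ∀ y ∈ M ++ R.toList, G.Adj x y := by
    intro y hy
    rw [← mem_neighborFinset]
    rcases List.mem_append.mp hy with hy | hy
    · exact hMN (List.mem_toFinset.mpr hy)
    · exact (mem_sdiff.mp (hR (mem_toList.mp hy))).1
  rw [hlen]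
  refine isContained_of_list (x := x) ?_ (fun h => G.irrefl (hstar x h)) hstar ?_
  · refine hMnodup.append R.nodup_toList fun a haM haR => ?_
    exact (mem_sdiff.mp (hR (mem_toList.mp haR))).2 (List.mem_toFinset.mpr haM)
  · intro i hi hi2 hi6
    obtain rfl | rfl | rfl : i = 0 ∨ i = 2 ∨ i = 4 := by omega
    · simpa [M] using h₁
    · simpa [M] using h₂
    · simpa [M] using h₃

theorem isContained_of_isClique {K : Finset V} {u : V} (ht : 7 ≤ t)
    (hK : G.IsClique (K : Set V)) (hK7 : 7 ≤ #K) (hu : u ∈ K) (hdeg : t - 1 ≤ G.degree u) :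
    SGraph t 3 ⊑ G := by
  refine isContained_of_hasMatchingIn ht hdeg ((hasMatchingIn_of_isClique
    (hK.subset (coe_subset.mpr (erase_subset u K))) ?_).mono fun w hw => ?_)
  · rw [card_erase_of_mem hu]; omega
  · rw [mem_erase] at hw
    exact (mem_neighborFinset _ _ _).mpr (hK hu hw.2 (Ne.symm hw.1))

theorem degree_lt_of_isClique (hG : ¬ SGraph t 3 ⊑ G) (ht : 7 ≤ t) {K : Finset V} {u : V}
    (hK : G.IsClique (K : Set V)) (hK7 : 7 ≤ #K) (hu : u ∈ K) : G.degree u < t - 1 :=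
  lt_of_not_ge fun hdeg => hG (isContained_of_isClique ht hK hK7 hu hdeg)

theorem le_degree_of_mem_compl_isClique (hGc : ¬ SGraph t 3 ⊑ Gᶜ)
    (hV : Fintype.card V = 2 * t - 1) (ht : 7 ≤ t) {K : Finset V} {u : V}
    (hK : Gᶜ.IsClique (K : Set V)) (hK7 : 7 ≤ #K) (hu : u ∈ K) : t ≤ G.degree u := by
  have := degree_lt_of_isClique hGc ht hK hK7 hu
  have := degree_add_degree_compl_s1 (G := G) u
  omega

theorem card_compl_neighborFinset_sdiff_add_card_le (hGc : ¬ SGraph t 3 ⊑ Gᶜ) (ht : 7 ≤ t)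
    {W : Finset V} {y : V} (hW : Gᶜ.IsClique (W : Set V)) (hW7 : 7 ≤ #W) (hy : y ∈ W) :
    #(Gᶜ.neighborFinset y \ W) + #W ≤ t - 1 := by
  have hsub : W.erase y ⊆ Gᶜ.neighborFinset y ∩ W := fun w hw => by
    rw [mem_erase] at hw
    exact mem_inter.mpr ⟨(mem_neighborFinset _ _ _).mpr (hW hy hw.2 (Ne.symm hw.1)), hw.2⟩
  have h₁ := card_le_card hsub
  rw [card_erase_of_mem hy] at h₁
  have h₂ := card_inter_add_card_sdiff (Gᶜ.neighborFinset y) W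
  have h₃ := degree_lt_of_isClique hGc ht hW hW7 hy
  rw [← card_neighborFinset_eq_degree] at h₃
  omega

theorem exists_compl_isClique_subset_neighborFinset (hG : ¬ SGraph t 3 ⊑ G) (ht : 7 ≤ t) {x : V}
    (hdeg : t - 1 ≤ G.degree x) :
    ∃ K ⊆ G.neighborFinset x, G.degree x ≤ #K + 4 ∧ Gᶜ.IsClique (K : Set V) := by
  rw [← card_neighborFinset_eq_degree]
  exact exists_compl_isClique_of_not_hasMatchingIn fun hM =>
    hG (isContained_of_hasMatchingIn ht hdeg hM)

theorem card_le_card_inter_compl_neighborFinset_add_two (hG : ¬ SGraph t 3 ⊑ G) (ht : 7 ≤ t)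
    {W W' K : Finset V} {x z : V} (hWW' : Disjoint W W')
    (hW : ∀ y ∈ W, #(Gᶜ.neighborFinset y \ W) ≤ 3) (hW' : ∀ y ∈ W', #(Gᶜ.neighborFinset y \ W') ≤ 3)
    (hz : z ∉ W') (hdeg : t - 1 ≤ G.degree z) (hKz : K ⊆ G.neighborFinset z)
    (hK : Gᶜ.IsClique (K : Set V)) (hK9 : 9 ≤ #K) (hxK : x ∈ K) (hxW : x ∈ W) :
    #W' ≤ #(W' ∩ Gᶜ.neighborFinset z) + 2 := by
  have hA : 6 ≤ #(K ∩ W) := by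
    have hsub : K \ W ⊆ Gᶜ.neighborFinset x \ W := fun w hw => by
      rw [mem_sdiff] at hw ⊢
      exact ⟨(mem_neighborFinset _ _ _).mpr (hK hxK hw.1 fun h => hw.2 (h ▸ hxW)), hw.2⟩
    have := card_le_card hsub
    have := card_inter_add_card_sdiff K W
    have := hW x hxW
    omega
  have hnbr : ∀ y ∈ W', 3 ≤ #((K ∩ W) ∩ G.neighborFinset y) := fun y hy => by
    have hyA : y ∉ K ∩ W := fun h => Finset.disjoint_left.mp hWW' (mem_inter.mp h).2 hy
    have hsub : (K ∩ W) ∩ Gᶜ.neighborFinset y ⊆ Gᶜ.neighborFinset y \ W' := fun w hw => by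
      rw [mem_inter, mem_inter] at hw
      exact mem_sdiff.mpr ⟨hw.2, Finset.disjoint_left.mp hWW' hw.1.2⟩
    have := card_le_card_inter_neighborFinset_add_compl (G := G) hyA
    have := card_le_card hsub
    have := hW' y hy
    omega
  by_contra! h
  have := card_le_card_inter_neighborFinset_add_compl (G := G) hz
  refine hG (isContained_of_hasMatchingIn ht hdeg
    ((hasMatchingIn_union_of_forall_le_card_inter (k := 3) (A := K ∩ W)
      (B := W' ∩ G.neighborFinset z) ?_ (by omega)
      fun y hy => hnbr y (mem_inter.mp hy).1).mono ?_))
  · exact hWW'.mono inter_subset_right inter_subset_left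
  · exact union_subset (inter_subset_left.trans hKz) inter_subset_right

end SGraph

section Ramsey

variable {V : Type*} {G : SimpleGraph V} {t : ℕ}

structure ComplCliquePair (G : SimpleGraph V) (t : ℕ) (S S' : Finset V) : Prop where
  disjoint : Disjoint S S'
  le_card_left : t ≤ #S + 4
  le_card_right : t ≤ #S' + 4
  isClique_left : Gᶜ.IsClique (S : Set V)
  isClique_right : Gᶜ.IsClique (S' : Set V)

theorem ComplCliquePair.symm {S S' : Finset V} (hP : ComplCliquePair G t S S') :
    ComplCliquePair G t S' S :=
  ⟨hP.disjoint.symm, hP.le_card_right, hP.le_card_left, hP.isClique_right, hP.isClique_left⟩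

variable [Fintype V] [DecidableEq V]

theorem ComplCliquePair.card_compl_union {S S' : Finset V} (hP : ComplCliquePair G t S S')
    (hV : Fintype.card V = 2 * t - 1) : #(S ∪ S')ᶜ + #S + #S' = 2 * t - 1 := by
  have := card_le_univ (S ∪ S')
  rw [card_compl, card_union_of_disjoint hP.disjoint] at *
  omega

variable [DecidableRel G.Adj]

theorem exists_complCliquePair (hG : ¬ SGraph t 3 ⊑ G) (hGc : ¬ SGraph t 3 ⊑ Gᶜ)
    (hV : Fintype.card V = 2 * t - 1) (ht : 15 ≤ t) {v : V} (hv : t - 1 ≤ G.degree v) :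
    ∃ S S', ComplCliquePair G t S S' := by
  obtain ⟨S₀, -, hS₀, hS₀cl⟩ := SGraph.exists_compl_isClique_subset_neighborFinset hG (by omega) hv
  obtain ⟨u, hu⟩ := card_pos.mp (by omega : 0 < #S₀)
  have hu_deg := SGraph.le_degree_of_mem_compl_isClique hGc hV (by omega) hS₀cl (by omega) hu
  obtain ⟨S, -, hS, hScl⟩ := SGraph.exists_compl_isClique_subset_neighborFinset hG (by omega)
    (by omega : t - 1 ≤ G.degree u)
  obtain ⟨w, hw⟩ := card_pos.mp (by omega : 0 < #S)
  have hw_deg := SGraph.le_degree_of_mem_compl_isClique hGc hV (by omega) hScl (by omega) hw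
  obtain ⟨S', hS'w, hS', hS'cl⟩ := SGraph.exists_compl_isClique_subset_neighborFinset hG
    (by omega) (by omega : t - 1 ≤ G.degree w)
  refine ⟨S, S', Finset.disjoint_left.mpr fun y hyS hyS' => ?_, by omega, by omega, hScl, hS'cl⟩
  have hwy : G.Adj w y := (mem_neighborFinset _ _ _).mp (hS'w hyS')
  exact ((compl_adj G w y).mp (hScl hw hyS (G.ne_of_adj hwy))).2 hwy

theorem card_add_card_le_of_forall_le_card_inter (ht : 13 ≤ t) {T W : Finset V}
    (hTW : Disjoint T W) (hW : t ≤ #W + 4)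
    (hmiss : ∀ y ∈ W, #(Gᶜ.neighborFinset y \ W) + #W ≤ t - 1)
    (hT : ∀ z ∈ T, #W ≤ #(W ∩ Gᶜ.neighborFinset z) + 2) : #T + #W ≤ t - 1 := by
  have hcount : #T * (#W - 2) ≤ #W * (t - 1 - #W) := by
    refine card_mul_le_card_mul Gᶜ.Adj (fun z hz => ?_) (fun y hy => ?_)
    · have hAbove : W.bipartiteAbove Gᶜ.Adj z = W ∩ Gᶜ.neighborFinset z := by
        ext; simp [bipartiteAbove]
      have := hT z hz
      rw [hAbove]
      omega
    · have hsub : T.bipartiteBelow Gᶜ.Adj y ⊆ Gᶜ.neighborFinset y \ W := fun z hz => by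
        rw [mem_bipartiteBelow] at hz
        exact mem_sdiff.mpr ⟨(mem_neighborFinset _ _ _).mpr hz.2.symm,
          Finset.disjoint_left.mp hTW hz.1⟩
      have := card_le_card hsub
      have := hmiss y hy
      omega
  obtain ⟨y, hy⟩ := card_pos.mp (by omega : 0 < #W)
  have := hmiss y hy
  obtain ⟨d, hd⟩ : ∃ d, t - 1 = #W + d := ⟨t - 1 - #W, by omega⟩
  obtain ⟨m, hm⟩ : ∃ m, #W = m + 2 := ⟨#W - 2, by omega⟩
  rw [hd, hm, Nat.add_sub_cancel, Nat.add_sub_cancel_left] at hcount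
  by_contra! hlt
  have : (d + 1) * m ≤ #T * m := Nat.mul_le_mul_right m (by omega)
  have : m ≤ 2 * d := by nlinarith
  omega

namespace ComplCliquePair

variable {S S' : Finset V}

theorem card_compl_neighborFinset_sdiff_add_card_le (hP : ComplCliquePair G t S S')
    (hGc : ¬ SGraph t 3 ⊑ Gᶜ) (ht : 15 ≤ t) {y : V} (hy : y ∈ S) :
    #(Gᶜ.neighborFinset y \ S) + #S ≤ t - 1 := by
  have := hP.le_card_left
  exact SGraph.card_compl_neighborFinset_sdiff_add_card_le hGc (by omega) hP.isClique_left
    (by omega) hy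

theorem le_degree (hP : ComplCliquePair G t S S') (hG : ¬ SGraph t 3 ⊑ G)
    (hGc : ¬ SGraph t 3 ⊑ Gᶜ) (hV : Fintype.card V = 2 * t - 1) (ht : 15 ≤ t) (z : V) :
    t ≤ G.degree z := by
  by_contra! hlt
  have hzc : t - 1 ≤ Gᶜ.degree z := by have := degree_add_degree_compl_s1 (G := G) z; omega
  obtain ⟨K, -, hK, hKcl⟩ := SGraph.exists_compl_isClique_subset_neighborFinset hGc (by omega) hzc
  rw [compl_compl] at hKcl
  obtain ⟨k, hkK, hk⟩ : ∃ k ∈ K, k ∈ S ∪ S' := by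
    by_contra! h
    have := card_le_card fun k hk => mem_compl.mpr (h k hk)
    have := hP.card_compl_union hV
    have := hP.le_card_left
    have := hP.le_card_right
    omega
  have h₁ := SGraph.degree_lt_of_isClique hG (by omega) hKcl (by omega) hkK
  have h₂ : t ≤ G.degree k := by
    rcases mem_union.mp hk with hk | hk
    · exact SGraph.le_degree_of_mem_compl_isClique hGc hV (by omega) hP.isClique_left
        (by have := hP.le_card_left; omega) hk
    · exact SGraph.le_degree_of_mem_compl_isClique hGc hV (by omega) hP.isClique_right
        (by have := hP.le_card_right; omega) hk
  omega

theorem card_le_card_inter_compl_neighborFinset_add_two_or (hP : ComplCliquePair G t S S')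
    (hG : ¬ SGraph t 3 ⊑ G) (hGc : ¬ SGraph t 3 ⊑ Gᶜ) (hV : Fintype.card V = 2 * t - 1)
    (ht : 15 ≤ t) {z : V} (hz : z ∉ S ∪ S') :
    #S' ≤ #(S' ∩ Gᶜ.neighborFinset z) + 2 ∨ #S ≤ #(S ∩ Gᶜ.neighborFinset z) + 2 := by
  have hdeg := hP.le_degree hG hGc hV ht z
  obtain ⟨K, hKz, hK, hKcl⟩ := SGraph.exists_compl_isClique_subset_neighborFinset hG (by omega)
    (by omega : t - 1 ≤ G.degree z)
  obtain ⟨x, hxK, hx⟩ : ∃ x ∈ K, x ∈ S ∪ S' := by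
    by_contra! h
    have hzK : z ∉ K := fun h => G.irrefl ((mem_neighborFinset _ _ _).mp (hKz h))
    have := card_le_card fun k (hk : k ∈ K) =>
      mem_erase.mpr ⟨by rintro rfl; exact hzK hk, mem_compl.mpr (h k hk)⟩
    have := card_erase_of_mem (mem_compl.mpr hz)
    have := hP.card_compl_union hV
    have := hP.le_card_left
    have := hP.le_card_right
    omega
  have h₃ : ∀ y ∈ S, #(Gᶜ.neighborFinset y \ S) ≤ 3 := fun y hy => by
    have := hP.card_compl_neighborFinset_sdiff_add_card_le hGc ht hy
    have := hP.le_card_left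
    omega
  have h₃' : ∀ y ∈ S', #(Gᶜ.neighborFinset y \ S') ≤ 3 := fun y hy => by
    have := hP.symm.card_compl_neighborFinset_sdiff_add_card_le hGc ht hy
    have := hP.le_card_right
    omega
  simp only [mem_union, not_or] at hz hx
  rcases hx with hxS | hxS'
  · exact .inl (SGraph.card_le_card_inter_compl_neighborFinset_add_two hG (by omega)
      hP.disjoint h₃ h₃' hz.2 (by omega) hKz hKcl (by omega) hxK hxS)
  · exact .inr (SGraph.card_le_card_inter_compl_neighborFinset_add_two hG (by omega)
      hP.disjoint.symm h₃' h₃ hz.1 (by omega) hKz hKcl (by omega) hxK hxS')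

end ComplCliquePair

theorem not_complCliquePair (hG : ¬ SGraph t 3 ⊑ G) (hGc : ¬ SGraph t 3 ⊑ Gᶜ)
    (hV : Fintype.card V = 2 * t - 1) (ht : 15 ≤ t) (S S' : Finset V) :
    ¬ ComplCliquePair G t S S' := by
  intro hP
  set T := {z ∈ (S ∪ S')ᶜ | #S ≤ #(S ∩ Gᶜ.neighborFinset z) + 2}
  have hT := card_add_card_le_of_forall_le_card_inter (by omega) (T := T) (W := S)
    (Finset.disjoint_left.mpr fun z hz hzS => by simp_all [T]) hP.le_card_left
    (fun y hy => hP.card_compl_neighborFinset_sdiff_add_card_le hGc ht hy)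
    fun z hz => (mem_filter.mp hz).2
  have hT' := card_add_card_le_of_forall_le_card_inter (by omega) (T := (S ∪ S')ᶜ \ T) (W := S')
    (Finset.disjoint_left.mpr fun z hz hzS => by simp_all [T]) hP.le_card_right
    (fun y hy => hP.symm.card_compl_neighborFinset_sdiff_add_card_le hGc ht hy)
    fun z hz => by
      rw [mem_sdiff, mem_filter] at hz
      exact (hP.card_le_card_inter_compl_neighborFinset_add_two_or hG hGc hV ht
        (mem_compl.mp hz.1)).resolve_right fun h => hz.2 ⟨hz.1, h⟩
  have := card_sdiff_add_card_eq_card (s := T) (t := (S ∪ S')ᶜ) (filter_subset _ _)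
  have := hP.card_compl_union hV
  omega

theorem SGraph.isContained_or_isContained_compl_s1 (hV : Fintype.card V = 2 * t - 1) (ht : 15 ≤ t) :
    SGraph t 3 ⊑ G ∨ SGraph t 3 ⊑ Gᶜ := by
  refine or_iff_not_imp_left.mpr fun hG => by_contra fun hGc => ?_
  obtain ⟨v⟩ : Nonempty V := Fintype.card_pos_iff.mp (by omega)
  rcases le_total (t - 1) (G.degree v) with hv | hv
  · obtain ⟨S, S', hP⟩ := exists_complCliquePair hG hGc hV ht hv
    exact not_complCliquePair hG hGc hV ht S S' hP
  · have hvc : t - 1 ≤ Gᶜ.degree v := by have := degree_add_degree_compl_s1 (G := G) v; omega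
    have hGcc : ¬ SGraph t 3 ⊑ Gᶜᶜ := by rwa [compl_compl]
    obtain ⟨S, S', hP⟩ := exists_complCliquePair hGc hGcc hV ht hvc
    exact not_complCliquePair hGc hGcc hV ht S S' hP

end Ramsey

def colorGraph {V C : Type*} (c : Sym2 V → C) (col : C) : SimpleGraph V :=
  SimpleGraph.fromEdgeSet {e | c e = col}

theorem hasMonoCopy_iff_exists_isContained {α V C : Type*} {H : SimpleGraph α} {c : Sym2 V → C} :
    HasMonoCopy H c ↔ ∃ col, H ⊑ colorGraph c col := by
  constructor
  · rintro ⟨f, col, hf⟩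
    exact ⟨col, ⟨⟨⟨f, fun {a b} hab => ⟨hf a b hab, f.injective.ne (H.ne_of_adj hab)⟩⟩,
      f.injective⟩⟩⟩
  · rintro ⟨col, ⟨g⟩⟩
    exact ⟨g.toEmbedding, col, fun a b hab => (g.toHom.map_adj hab).1⟩

theorem colorGraph_one_eq_compl {V : Type*} (c : Sym2 V → Fin 2) :
    colorGraph c 1 = (colorGraph c 0)ᶜ := by
  have : ∀ i : Fin 2, i = 1 ↔ i ≠ 0 := by decide
  ext x y
  simp only [colorGraph, compl_adj, fromEdgeSet_adj, Set.mem_ofPred_eq, this]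
  tauto

theorem hasMonoCopy_iff_isContained_or_isContained_compl {α V : Type*} {H : SimpleGraph α}
    (c : Sym2 V → Fin 2) : HasMonoCopy H c ↔ H ⊑ colorGraph c 0 ∨ H ⊑ (colorGraph c 0)ᶜ := by
  rw [hasMonoCopy_iff_exists_isContained, Fin.exists_fin_two, colorGraph_one_eq_compl]

theorem exists_colorGraph_eq {V : Type*} (G : SimpleGraph V) :
    ∃ c : Sym2 V → Fin 2, colorGraph c 0 = G := by
  classical
  refine ⟨fun e => if e ∈ G.edgeSet then 0 else 1, ?_⟩
  ext x y
  by_cases h : G.Adj x y <;> simp [colorGraph, h]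

theorem SGraph.not_isContained_comap_top {V : Type*} {t r : ℕ} (ht : 3 ≤ t) (hr : 1 ≤ r)
    (P : V → Bool) : ¬ SGraph t r ⊑ (⊤ : SimpleGraph Bool).comap P := by
  rintro ⟨f⟩
  have hne : ∀ a b : ℕ, (ha : a < t) → (hb : b < t) → a ≠ b → (a = 0 ∨ b = a + 1 ∧ a = 1) →
      P (f ⟨a, ha⟩) ≠ P (f ⟨b, hb⟩) := fun a b ha hb hab h => by
    have : (SGraph t r).Adj ⟨a, ha⟩ ⟨b, hb⟩ := by
      simp only [SGraph, fromRel_adj, ne_eq, Fin.mk.injEq]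
      omega
    simpa using f.toHom.map_adj this
  have h₀₁ := hne 0 1 (by omega) (by omega) (by omega) (by omega)
  have h₀₂ := hne 0 2 (by omega) (by omega) (by omega) (by omega)
  have h₁₂ := hne 1 2 (by omega) (by omega) (by omega) (by omega)
  revert h₀₁ h₀₂ h₁₂
  cases P (f ⟨0, _⟩) <;> cases P (f ⟨1, _⟩) <;> cases P (f ⟨2, _⟩) <;> decide

theorem SGraph.not_isContained_compl_comap_top {V : Type*} [Fintype V] {t r : ℕ} (P : V → Bool)
    (hP : ∀ b, #{v | P v = b} < t) : ¬ SGraph t r ⊑ ((⊤ : SimpleGraph Bool).comap P)ᶜ := by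
  rintro ⟨f⟩
  let o : Fin t := ⟨0, (Nat.zero_le _).trans_lt (hP true)⟩
  have hfib : ∀ a, P (f a) = P (f o) := fun a => by
    by_cases hao : a = o
    · rw [hao]
    have : (SGraph t r).Adj o a := by
      simp only [SGraph, fromRel_adj]
      exact ⟨Ne.symm hao, .inl (.inl rfl)⟩
    simpa [compl_adj, eq_comm] using (f.toHom.map_adj this).2
  have hcard := card_le_card_of_injOn f (s := univ) (t := {v | P v = P (f o)})
    (fun a _ => by simp [hfib]) f.injective.injOn
  rw [card_univ, Fintype.card_fin] at hcard
  exact (hP (P (f o))).not_ge hcard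

theorem card_filter_decide_val_lt_eq (t : ℕ) (b : Bool) :
    #{x : Fin (2 * t - 2) | decide ((x : ℕ) < t - 1) = b} = t - 1 := by
  cases b
  · simp only [decide_eq_false_iff_not, filter_not, card_sdiff_of_subset (filter_subset _ _),
      card_univ, Fintype.card_fin, Fin.card_filter_val_lt]
    omega
  · simp only [decide_eq_true_eq, Fin.card_filter_val_lt]
    omega

theorem ramsey_St3 (t : ℕ) (ht : 15 ≤ t) :
    (∀ c : Sym2 (Fin (2 * t - 1)) → Fin 2, HasMonoCopy (SGraph t 3) c) ∧
    (∃ c : Sym2 (Fin (2 * t - 2)) → Fin 2, ¬ HasMonoCopy (SGraph t 3) c) := by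
  classical
  refine ⟨fun c => (hasMonoCopy_iff_isContained_or_isContained_compl c).mpr
    (SGraph.isContained_or_isContained_compl_s1 (Fintype.card_fin _) ht), ?_⟩
  let P : Fin (2 * t - 2) → Bool := fun x => decide ((x : ℕ) < t - 1)
  obtain ⟨c, hc⟩ := exists_colorGraph_eq ((⊤ : SimpleGraph Bool).comap P)
  refine ⟨c, fun h => ?_⟩
  rw [hasMonoCopy_iff_isContained_or_isContained_compl, hc] at h
  have hP : ∀ b, #{x | P x = b} < t := fun b => by
    rw [card_filter_decide_val_lt_eq]; omega
  exact h.elim (SGraph.not_isContained_comap_top (by omega) (by norm_num) P)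
    (SGraph.not_isContained_compl_comap_top P hP)
end

section
/- For integers r ≥ 1 and t ≥ 6r - 4, the 2-color Ramsey number R(S_t^r, S_t^r) is at most 2t + 2r - 1: every red/blue edge coloring of K_{2t+2r-1} contains a monochromatic copy of S_t^r. -/
/-!
A vertex `v` of a 2-coloured `K_{2t+2r-1}` has at least `t + r - 1` neighbours in one colour,
say red. A greedy red matching in that neighbourhood either reaches `r` edges, which together
with `v` give a red `S_t^r`, or it stops early and leaves a red-independent, i.e. blue, clique
`M` with `|M| ≥ t - r + 1`. If `|M| < t`, pick `u ∈ M`. Either `u` has `t - 1` blue neighbours,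
and a blue `S_t^r` centred at `u` takes its triangles inside `M` (this is where `t ≥ 6r - 4` is
needed), or `u` has at least `t + 2r` red neighbours, and the greedy argument at `u` ends in a
blue `K_t`.
-/

open Finset

namespace SimpleGraph

variable {V α : Type*} {G : SimpleGraph V}

theorem isContained_of_isClique [Fintype α] (H : SimpleGraph α) {M : Finset V}
    (hM : G.IsClique (M : Set V)) (hcard : Fintype.card α ≤ #M) : H ⊑ G := by
  obtain ⟨f, hf⟩ := Function.Embedding.exists_of_card_le_finset hcard
  exact ⟨⟨⟨f, fun hab => hM (hf ⟨_, rfl⟩) (hf ⟨_, rfl⟩) (f.injective.ne hab.ne)⟩,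
    f.injective⟩⟩

theorem isContained_or_isContained_compl_of_card_le_two [Fintype α] [Fintype V]
    (H : SimpleGraph α) (G : SimpleGraph V) (h2 : Fintype.card α ≤ 2)
    (hV : Fintype.card α ≤ Fintype.card V) : H ⊑ G ∨ H ⊑ Gᶜ := by
  classical
  obtain ⟨M, -, hM⟩ :=
    exists_subset_card_eq (s := univ) (n := Fintype.card α) (by simpa)
  suffices G.IsClique (M : Set V) ∨ Gᶜ.IsClique (M : Set V) from
    this.imp (isContained_of_isClique H · hM.ge) (isContained_of_isClique H · hM.ge)
  rcases (by omega : #M ≤ 1 ∨ #M = 2) with h | h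
  · exact .inl (IsClique.of_subsingleton (card_le_one_iff_subsingleton.1 h))
  · obtain ⟨x, y, hxy, rfl⟩ := card_eq_two.1 h
    push_cast
    by_cases hadj : G.Adj x y
    · exact .inl (isClique_pair.2 fun _ => hadj)
    · exact .inr (isClique_pair.2 fun _ => (compl_adj G x y).2 ⟨hxy, hadj⟩)

/-- For injective `p`, the matching with edges `p 0 p 1`, `p 2 p 3`, … (the indexing of the
triangles of `SGraph`). -/
def AdjPairs {m : ℕ} (G : SimpleGraph V) (p : Fin m → V) : Prop :=
  ∀ i j : Fin m, (j : ℕ) = i + 1 → Even (i : ℕ) → G.Adj (p i) (p j)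

theorem AdjPairs.cons_cons {m : ℕ} {p : Fin m → V} {x y : V} (hp : G.AdjPairs p)
    (hxy : G.Adj x y) : G.AdjPairs (Fin.cons x (Fin.cons y p) : Fin (m + 2) → V) := by
  intro i j hij hi
  induction i using Fin.cases with
  | zero => obtain rfl : j = 1 := Fin.ext hij; exact hxy
  | succ i =>
    induction i using Fin.cases with
    | zero => simp at hi
    | succ i =>
      simp only [Fin.val_succ] at hij hi
      obtain ⟨j, rfl⟩ : ∃ j' : Fin m, j = j'.succ.succ :=
        ⟨⟨j - 2, by omega⟩, Fin.ext (by simp; omega)⟩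
      simpa using hp i j (by simpa using hij) (by simpa [parity_simps] using hi)

theorem IsClique.adjPairs {m : ℕ} {M : Set V} (hM : G.IsClique M) (p : Fin m ↪ V)
    (hp : ∀ i, p i ∈ M) : G.AdjPairs p :=
  fun i j hij _ => hM (hp i) (hp j) (p.injective.ne (Fin.ne_of_val_ne (by omega)))

/-- A maximal matching inside `s` with fewer than `k` edges leaves an independent set. -/
theorem exists_adjPairs_or_isIndepSet (s : Finset V) (k : ℕ) :
    (∃ p : Fin (2 * k) ↪ V, (∀ i, p i ∈ s) ∧ G.AdjPairs p) ∨
      ∃ M ⊆ s, G.IsIndepSet (M : Set V) ∧ #s + 2 ≤ #M + 2 * k := by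
  classical
  induction k with
  | zero => exact .inl ⟨⟨Fin.elim0, fun i => i.elim0⟩, fun i => i.elim0, fun i => i.elim0⟩
  | succ k ih =>
    obtain ⟨p, hps, hp⟩ | ⟨M, hMs, hM, hcard⟩ := ih
    · by_cases hR : ∃ x ∈ s \ univ.map p, ∃ y ∈ s \ univ.map p, G.Adj x y
      · obtain ⟨x, hx, y, hy, hxy⟩ := hR
        simp only [mem_sdiff, mem_map, mem_univ, true_and, not_exists] at hx hy
        have hyp : y ∉ Set.range p := fun ⟨i, hi⟩ => hy.2 i hi
        have hxyp : x ∉ Set.range (Fin.Embedding.cons p hyp) := by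
          rintro ⟨i, hi⟩
          induction i using Fin.cases with
          | zero => exact hxy.ne hi.symm
          | succ i => exact hx.2 i (by simpa using hi)
        refine .inl ⟨Fin.Embedding.cons (Fin.Embedding.cons p hyp) hxyp, fun i => ?_,
          hp.cons_cons hxy⟩
        induction i using Fin.cases with
        | zero => simpa using hx.1
        | succ i =>
          induction i using Fin.cases with
          | zero => simpa using hy.1
          | succ i => simpa using hps i
      · push Not at hR
        refine .inr ⟨s \ univ.map p, sdiff_subset, fun x hx y hy _ => hR x hx y hy, ?_⟩
        have := card_le_card_sdiff_add_card (s := s) (t := univ.map p)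
        simp only [card_map, card_univ, Fintype.card_fin] at this
        omega
    · exact .inr ⟨M, hMs, hM, by omega⟩

theorem sGraph_isContained_of_star {s r : ℕ} (hr : 2 * r ≤ s) (v : V) (g : Fin s ↪ V)
    (hv : ∀ i, G.Adj v (g i)) (hg : G.AdjPairs fun i : Fin (2 * r) => g (Fin.castLE hr i)) :
    SGraph (s + 1) r ⊑ G := by
  let f := Fin.Embedding.cons g (a := v) fun ⟨i, hi⟩ => (hv i).ne hi.symm
  refine ⟨⟨⟨f, ?_⟩, f.injective⟩⟩
  intro a b hab
  induction a using Fin.cases <;> induction b using Fin.cases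
  · exact absurd rfl hab.ne
  · simpa [f] using hv _
  · simpa [f] using (hv _).symm
  · rename_i i j
    simp only [SGraph, fromRel_adj, Fin.val_succ] at hab
    simp only [f, Fin.Embedding.coe_cons, Fin.cons_succ]
    rcases hab.2 with (h | ⟨hij, hi, hj⟩) | (h | ⟨hji, hj, hi⟩)
    · omega
    · exact hg ⟨i, by omega⟩ ⟨j, by omega⟩ (by simp; omega)
        (Nat.even_iff.2 (by simp; omega))
    · omega
    · exact (hg ⟨j, by omega⟩ ⟨i, by omega⟩ (by simp; omega)
        (Nat.even_iff.2 (by simp; omega))).symm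

theorem sGraph_isContained_of_adjPairs [Fintype V] [DecidableRel G.Adj] {t r : ℕ}
    (ht : 2 * r < t) (v : V) (hdeg : t - 1 ≤ G.degree v) (p : Fin (2 * r) ↪ V)
    (hpv : ∀ i, G.Adj v (p i)) (hp : G.AdjPairs p) : SGraph t r ⊑ G := by
  classical
  obtain ⟨m, rfl⟩ : ∃ m, t = 2 * r + m + 1 := ⟨t - 2 * r - 1, by omega⟩
  obtain ⟨q, hq⟩ := Function.Embedding.exists_of_card_le_finset
    (α := Fin m) (s := G.neighborFinset v \ univ.map p) (by
      have := le_card_sdiff (univ.map p) (G.neighborFinset v)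
      simp only [card_map, card_univ, Fintype.card_fin, card_neighborFinset_eq_degree]
        at this ⊢
      omega)
  have hqv : ∀ i, q i ∈ G.neighborFinset v ∧ ∀ j, p j ≠ q i := by
    intro i; simpa using hq ⟨i, rfl⟩
  have hdisj : Disjoint (Set.range p) (Set.range q) :=
    Set.disjoint_range_iff.2 fun i j => (hqv j).2 i
  refine sGraph_isContained_of_star (Nat.le_add_right _ _) v (Fin.Embedding.append hdisj) ?_ ?_
  · intro i
    induction i using Fin.addCases <;> simp [hpv, (mem_neighborFinset ..).1 (hqv _).1]
  · convert hp using 1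
    funext i
    exact Fin.append_left _ _ _

theorem sGraph_isContained_or_isIndepSet [Fintype V] [DecidableRel G.Adj] {t r : ℕ}
    (ht : 2 * r < t) (v : V) (hdeg : t - 1 ≤ G.degree v) :
    SGraph t r ⊑ G ∨
      ∃ M : Finset V, G.IsIndepSet (M : Set V) ∧ G.degree v + 2 ≤ #M + 2 * r := by
  obtain ⟨p, hpv, hp⟩ | ⟨M, -, hM, hcard⟩ :=
    G.exists_adjPairs_or_isIndepSet (G.neighborFinset v) r
  · refine .inl (sGraph_isContained_of_adjPairs ht v hdeg p (fun i => ?_) hp)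
    exact (mem_neighborFinset ..).1 (hpv i)
  · exact .inr ⟨M, hM, by rwa [card_neighborFinset_eq_degree] at hcard⟩

theorem sGraph_isContained_or_compl_of_le_degree [Fintype V] [DecidableEq V]
    [DecidableRel G.Adj] {t r : ℕ} (ht : 6 * r - 4 ≤ t) (hrt : 2 * r < t)
    (hV : 2 * t + 2 * r - 1 ≤ Fintype.card V) {v : V} (hv : t + r - 1 ≤ G.degree v) :
    SGraph t r ⊑ G ∨ SGraph t r ⊑ Gᶜ := by
  obtain h | ⟨M, hM, hMcard⟩ := sGraph_isContained_or_isIndepSet (G := G) hrt v (by omega)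
  · exact .inl h
  rw [← isClique_compl] at hM
  by_cases hMt : t ≤ #M
  · exact .inr (isContained_of_isClique _ hM (by simpa))
  obtain ⟨u, hu⟩ : M.Nonempty := card_pos.1 (by omega)
  by_cases hu' : t - 1 ≤ Gᶜ.degree u
  · obtain ⟨p, hp⟩ := Function.Embedding.exists_of_card_le_finset
      (α := Fin (2 * r)) (s := M.erase u) (by rw [card_erase_of_mem hu]; simp; omega)
    have hpM : ∀ i, p i ∈ M.erase u := fun i => hp ⟨i, rfl⟩
    refine .inr (sGraph_isContained_of_adjPairs hrt u hu' p (fun i => ?_) ?_)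
    · exact hM hu (mem_of_mem_erase (hpM i)) (ne_of_mem_erase (hpM i)).symm
    · exact hM.adjPairs p fun i => mem_of_mem_erase (hpM i)
  have := G.degree_compl u
  obtain h | ⟨M', hM', hM'card⟩ := sGraph_isContained_or_isIndepSet (G := G) hrt u (by omega)
  · exact .inl h
  · exact .inr (isContained_of_isClique _ ((isClique_compl G).2 hM') (by simp; omega))

theorem sGraph_isContained_or_compl [Fintype V] (G : SimpleGraph V) {t r : ℕ}
    (ht : 6 * r - 4 ≤ t) (hV : 2 * t + 2 * r - 1 ≤ Fintype.card V) :
    SGraph t r ⊑ G ∨ SGraph t r ⊑ Gᶜ := by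
  classical
  rcases le_or_gt t (2 * r) with hrt | hrt
  -- `6r - 4 ≤ t ≤ 2r` forces `t ≤ 2`
  · exact isContained_or_isContained_compl_of_card_le_two _ G (by simp; omega) (by simp; omega)
  obtain ⟨v⟩ : Nonempty V := Fintype.card_pos_iff.1 (by omega)
  by_cases hv : t + r - 1 ≤ G.degree v
  · exact sGraph_isContained_or_compl_of_le_degree ht hrt hV hv
  · have := G.degree_compl v
    simpa [or_comm] using
      sGraph_isContained_or_compl_of_le_degree (G := Gᶜ) ht hrt hV (v := v) (by omega)

theorem IsContained.hasMonoCopy {C : Type*} {H : SimpleGraph α} {c : Sym2 V → C} (col : C)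
    (hG : ∀ x y, G.Adj x y → c s(x, y) = col) (h : H ⊑ G) : HasMonoCopy H c := by
  obtain ⟨f⟩ := h
  exact ⟨f.toEmbedding, col, fun a b hab => hG _ _ (f.toHom.map_adj hab)⟩

end SimpleGraph

open SimpleGraph in
theorem ramsey_Str_upper_general (r t : ℕ) (ht : 6 * r - 4 ≤ t) :
    ∀ c : Sym2 (Fin (2 * t + 2 * r - 1)) → Fin 2, HasMonoCopy (SGraph t r) c := by
  intro c
  obtain h | h := sGraph_isContained_or_compl (fromEdgeSet {e | c e = 0}) ht (by simp)
  · exact h.hasMonoCopy 0 fun x y hxy => ((fromEdgeSet_adj _).1 hxy).1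
  · refine h.hasMonoCopy 1 fun x y hxy => Fin.eq_one_of_ne_zero _ fun h0 => ?_
    rw [compl_adj, fromEdgeSet_adj] at hxy
    exact hxy.2 ⟨h0, hxy.1⟩

theorem ramsey_Str_upper (r t : ℕ) (hr : 1 ≤ r) (ht : 6 * r - 4 ≤ t) :
    ∀ c : Sym2 (Fin (2 * t + 2 * r - 1)) → Fin 2, HasMonoCopy (SGraph t r) c :=
  ramsey_Str_upper_general r t ht
end

section
/- For every k ≥ 1 and t ≥ 3, there exists an edge-coloring of the complete graph on 2(t-1)·5^{(k-2)/2} vertices (if k is even) or (t-1)·5^{(k-1)/2} vertices (if k is odd) using at most k colors that contains no rainbow triangle and no monochromatic copy of S_t^2. Consequently gr_k(K_3 ; S_t^2) ≥ 2(t-1)·5^{(k-2)/2} + 1 for even k and ≥ (t-1)·5^{(k-1)/2} + 1 for odd k. -/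
/-!
Start from a monochromatic `K_{t-1}` and repeatedly blow up: replace every vertex of the
pentagonal 2-coloring of `K_5` (two new colors), or of `K_2` (one new color), by a copy of the
coloring built so far. A blow-up of Gallai colorings is again Gallai; the new color classes are
blow-ups of triangle-free graphs, hence triangle-free, and an old color class stays inside the
copies. So every color class is triangle-free, except the first one, whose components have
`t - 1` vertices and so contain no star `K_{1,t-1}`. Since `S_t^2` contains both a triangle and
`K_{1,t-1}`, no color class contains it, and restricting to fewer vertices gives the bound.
-/

open SimpleGraph Function

variable {α β V W B C C' D : Type*}

section Colorings

variable {H : SimpleGraph α} {c : Sym2 V → C} {col : C}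

lemma HasMonoCopyCol.of_copy {H' : SimpleGraph β} (e : H'.Copy H)
    (h : HasMonoCopyCol H c col) : HasMonoCopyCol H' c col := by
  obtain ⟨f, hf⟩ := h
  exact ⟨e.toEmbedding.trans f, fun a b hab => hf _ _ (e.toHom.map_adj hab)⟩

lemma HasMonoCopyCol.of_comap {e : W ↪ V} (h : HasMonoCopyCol H (c ∘ Sym2.map e) col) :
    HasMonoCopyCol H c col := by
  obtain ⟨f, hf⟩ := h
  exact ⟨f.trans e, fun a b hab => by simpa using hf a b hab⟩

lemma HasMonoCopyCol.of_comp {g : C → C'} (hg : Injective g)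
    (h : HasMonoCopyCol H (g ∘ c) (g col)) : HasMonoCopyCol H c col := by
  obtain ⟨f, hf⟩ := h
  exact ⟨f, fun a b hab => hg (hf a b hab)⟩

lemma not_hasMonoCopyCol_of_card_lt [Fintype α] [Fintype V]
    (h : Fintype.card V < Fintype.card α) : ¬HasMonoCopyCol H c col :=
  fun ⟨f, _⟩ => h.not_ge (Fintype.card_le_of_embedding f)

lemma HasRainbowTriangle.of_comap {e : W → V} (h : HasRainbowTriangle (c ∘ Sym2.map e)) :
    HasRainbowTriangle c := by
  obtain ⟨x, y, z, h⟩ := h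
  exact ⟨e x, e y, e z, by simpa using h⟩

lemma HasRainbowTriangle.of_comp {g : C → C'} (h : HasRainbowTriangle (g ∘ c)) :
    HasRainbowTriangle c := by
  obtain ⟨x, y, z, h₁, h₂, h₃⟩ := h
  exact ⟨x, y, z, fun h => h₁ (congrArg g h), fun h => h₂ (congrArg g h),
    fun h => h₃ (congrArg g h)⟩

lemma not_hasRainbowTriangle_of_card_le_two [Fintype C] (hC : Fintype.card C ≤ 2)
    (c : Sym2 V → C) : ¬HasRainbowTriangle c := by
  classical
  rintro ⟨x, y, z, h₁, h₂, h₃⟩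
  have : ({c s(x, y), c s(y, z), c s(x, z)} : Finset C).card = 3 :=
    Finset.card_eq_three.mpr ⟨_, _, _, h₁, h₃, h₂, rfl⟩
  have := this ▸ Finset.card_le_univ {c s(x, y), c s(y, z), c s(x, z)}
  omega

end Colorings

lemma sGraph_adj_of_val_eq_zero {t r : ℕ} {a b : Fin t} (ha : a.val = 0) (hab : a ≠ b) :
    (SGraph t r).Adj a b := by
  simp [SGraph, hab, ha]

lemma sGraph_mono {t r r' : ℕ} (h : r ≤ r') : SGraph t r ≤ SGraph t r' := by
  intro a b
  simp only [SGraph, fromRel_adj]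
  omega

def topCopySGraph {t : ℕ} (ht : 3 ≤ t) : (⊤ : SimpleGraph (Fin 3)).Copy (SGraph t 2) :=
  Hom.toCopy ⟨Fin.castLE ht, fun {a b} hab => by
    fin_cases a <;> fin_cases b <;> simp_all [SGraph, Fin.ext_iff]⟩ (Fin.castLE_injective ht)

section BlowUp

variable [DecidableEq B] {d : Sym2 B → D} {c : Sym2 V → C}

def blowUp (d : Sym2 B → D) (c : Sym2 V → C) : Sym2 (B × V) → C ⊕ D :=
  Sym2.lift ⟨fun x y => if x.1 = y.1 then .inl (c s(x.2, y.2)) else .inr (d s(x.1, y.1)),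
    fun x y => by simp only [eq_comm, Sym2.eq_swap]⟩

@[simp]
lemma blowUp_mk (x y : B × V) :
    blowUp d c s(x, y) = if x.1 = y.1 then .inl (c s(x.2, y.2)) else .inr (d s(x.1, y.1)) :=
  rfl

lemma blowUp_mk_of_eq {x y : B × V} (h : x.1 = y.1) : blowUp d c s(x, y) = .inl (c s(x.2, y.2)) :=
  if_pos h

lemma blowUp_mk_of_ne {x y : B × V} (h : x.1 ≠ y.1) : blowUp d c s(x, y) = .inr (d s(x.1, y.1)) :=
  if_neg h

lemma not_hasRainbowTriangle_blowUp (hc : ¬HasRainbowTriangle c) (hd : ¬HasRainbowTriangle d) :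
    ¬HasRainbowTriangle (blowUp d c) := by
  rintro ⟨x, y, z, h₁, h₂, h₃⟩
  by_cases hxy : x.1 = y.1 <;> by_cases hyz : y.1 = z.1 <;> by_cases hxz : x.1 = z.1 <;>
    simp_all [Sym2.eq_swap]
  -- when exactly two vertices share a block, both edges to the third get the same color
  · exact hc ⟨_, _, _, h₁, h₂, h₃⟩
  · exact hd ⟨_, _, _, h₁, h₂, h₃⟩

lemma HasMonoCopyCol.of_blowUp_inl {H : SimpleGraph α} {a₀ : α} (ha₀ : ∀ a, a ≠ a₀ → H.Adj a₀ a)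
    {col : C} (h : HasMonoCopyCol H (blowUp d c) (.inl col)) : HasMonoCopyCol H c col := by
  obtain ⟨f, hf⟩ := h
  have hblock : ∀ a, (f a).1 = (f a₀).1 := by
    intro a
    by_cases ha : a = a₀
    · rw [ha]
    by_contra hne
    simpa [blowUp_mk_of_ne (Ne.symm hne)] using hf a₀ a (ha₀ a ha)
  refine ⟨⟨fun a => (f a).2, fun a b hab => f.injective (Prod.ext ?_ hab)⟩, fun a b hab => ?_⟩
  · rw [hblock a, hblock b]
  · exact Sum.inl_injective <|
      (blowUp_mk_of_eq ((hblock a).trans (hblock b).symm)).symm.trans (hf a b hab)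

lemma HasMonoCopyCol.of_blowUp_inr {col : D}
    (h : HasMonoCopyCol (⊤ : SimpleGraph α) (blowUp d c) (.inr col)) :
    HasMonoCopyCol (⊤ : SimpleGraph α) d col := by
  obtain ⟨f, hf⟩ := h
  have hblock : ∀ a b, a ≠ b → (f a).1 ≠ (f b).1 := fun a b hab heq => by
    simpa [blowUp_mk_of_eq heq] using hf a b hab
  exact ⟨⟨fun a => (f a).1, fun a b => not_imp_not.mp (hblock a b)⟩,
    fun a b hab => Sum.inr_injective <| (blowUp_mk_of_ne (hblock a b hab)).symm.trans (hf a b hab)⟩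

end BlowUp

/-- `SGraph t 0` is the star `K_{1,t-1}`. -/
structure IsGallaiTriangleOrStarFree (t : ℕ) (c : Sym2 V → C) : Prop where
  not_hasRainbowTriangle : ¬HasRainbowTriangle c
  triangleFree_or_starFree :
    ∀ col, ¬HasMonoCopyCol (⊤ : SimpleGraph (Fin 3)) c col ∨ ¬HasMonoCopyCol (SGraph t 0) c col

namespace IsGallaiTriangleOrStarFree

variable {t : ℕ} {c : Sym2 V → C}

lemma of_card_lt [Fintype V] (hV : Fintype.card V < t) (col : C) :
    IsGallaiTriangleOrStarFree t (fun _ : Sym2 V => col) where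
  not_hasRainbowTriangle := fun ⟨_, _, _, h, _, _⟩ => h rfl
  triangleFree_or_starFree _ := .inr (not_hasMonoCopyCol_of_card_lt (by simpa using hV))

lemma comap (h : IsGallaiTriangleOrStarFree t c) (e : W ↪ V) :
    IsGallaiTriangleOrStarFree t (c ∘ Sym2.map e) where
  not_hasRainbowTriangle hr := h.not_hasRainbowTriangle hr.of_comap
  triangleFree_or_starFree col :=
    (h.triangleFree_or_starFree col).imp (mt .of_comap) (mt .of_comap)

lemma comp_equiv (h : IsGallaiTriangleOrStarFree t c) (g : C ≃ C') :
    IsGallaiTriangleOrStarFree t (g ∘ c) where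
  not_hasRainbowTriangle hr := h.not_hasRainbowTriangle hr.of_comp
  triangleFree_or_starFree col := by
    rw [← g.apply_symm_apply col]
    exact (h.triangleFree_or_starFree _).imp (mt (.of_comp g.injective))
      (mt (.of_comp g.injective))

lemma blowUp [DecidableEq B] (h : IsGallaiTriangleOrStarFree t c) (ht : 0 < t) {d : Sym2 B → D}
    (hd : ¬HasRainbowTriangle d)
    (hd₃ : ∀ col, ¬HasMonoCopyCol (⊤ : SimpleGraph (Fin 3)) d col) :
    IsGallaiTriangleOrStarFree t (blowUp d c) where
  not_hasRainbowTriangle := not_hasRainbowTriangle_blowUp h.not_hasRainbowTriangle hd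
  triangleFree_or_starFree
    | .inl col => (h.triangleFree_or_starFree col).imp
        (mt (.of_blowUp_inl (a₀ := 0) fun _ ha => Ne.symm ha))
        (mt (.of_blowUp_inl (a₀ := ⟨0, ht⟩) fun _ ha =>
          sGraph_adj_of_val_eq_zero rfl (Ne.symm ha)))
    | .inr col => .inl (mt .of_blowUp_inr (hd₃ col))

lemma not_hasMonoCopy (h : IsGallaiTriangleOrStarFree t c) (ht : 3 ≤ t) :
    ¬HasMonoCopy (SGraph t 2) c := by
  rintro ⟨f, col, hf⟩
  rcases h.triangleFree_or_starFree col with h₃ | hstar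
  · exact h₃ (HasMonoCopyCol.of_copy (topCopySGraph ht) ⟨f, hf⟩)
  · exact hstar (HasMonoCopyCol.of_copy (.ofLE _ _ (sGraph_mono (by norm_num))) ⟨f, hf⟩)

end IsGallaiTriangleOrStarFree

/-- The 2-coloring of `K_5` by the pentagon `C_5` and its complement, another pentagon. -/
def pentagonColoring (e : Sym2 (Fin 5)) : Bool :=
  decide (e ∈ (cycleGraph 5).edgeSet)

lemma not_hasMonoCopyCol_top_pentagonColoring (col : Bool) :
    ¬HasMonoCopyCol (⊤ : SimpleGraph (Fin 3)) pentagonColoring col := by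
  have hC₅ : ∀ col, ∀ x y z : Fin 5, x ≠ y → y ≠ z → x ≠ z →
      pentagonColoring s(x, y) = col → pentagonColoring s(y, z) = col →
      pentagonColoring s(x, z) ≠ col := by
    decide
  rintro ⟨f, hf⟩
  exact hC₅ col (f 0) (f 1) (f 2) (by simp) (by simp) (by simp) (hf 0 1 (by decide))
    (hf 1 2 (by decide)) (hf 0 2 (by decide))

lemma exists_blowUp_fin [Fintype B] [DecidableEq B] [Fintype D] {t N k N' k' : ℕ} (ht : 0 < t)
    {c : Sym2 (Fin N) → Fin k} (hc : IsGallaiTriangleOrStarFree t c) {d : Sym2 B → D}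
    (hd : ¬HasRainbowTriangle d) (hd₃ : ∀ col, ¬HasMonoCopyCol (⊤ : SimpleGraph (Fin 3)) d col)
    (hN : N' = Fintype.card B * N) (hk : k' = k + Fintype.card D) :
    ∃ c' : Sym2 (Fin N') → Fin k', IsGallaiTriangleOrStarFree t c' := by
  subst hN hk
  let eV : Fin (Fintype.card B * N) ≃ B × Fin N :=
    finProdFinEquiv.symm.trans ((Fintype.equivFin B).symm.prodCongr (.refl _))
  let eC : Fin k ⊕ D ≃ Fin (k + Fintype.card D) :=
    ((Equiv.refl _).sumCongr (Fintype.equivFin D)).trans finSumFinEquiv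
  exact ⟨_, ((hc.blowUp ht hd hd₃).comp_equiv eC).comap eV.toEmbedding⟩

lemma exists_pentagonal_fin {t : ℕ} (ht : 0 < t) (j : ℕ) :
    ∃ c : Sym2 (Fin ((t - 1) * 5 ^ j)) → Fin (2 * j + 1), IsGallaiTriangleOrStarFree t c := by
  induction j with
  | zero => exact ⟨_, .of_card_lt (by simp; omega) 0⟩
  | succ j ih =>
    obtain ⟨c, hc⟩ := ih
    exact exists_blowUp_fin ht hc (not_hasRainbowTriangle_of_card_le_two le_rfl _)
      not_hasMonoCopyCol_top_pentagonColoring (by simp; ring) (by simp; ring)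

lemma exists_doubled_pentagonal_fin {t : ℕ} (ht : 0 < t) (j : ℕ) :
    ∃ c : Sym2 (Fin (2 * ((t - 1) * 5 ^ j))) → Fin (2 * j + 2),
      IsGallaiTriangleOrStarFree t c := by
  obtain ⟨c, hc⟩ := exists_pentagonal_fin ht j
  exact exists_blowUp_fin (B := Fin 2) ht hc (d := fun _ => ())
    (not_hasRainbowTriangle_of_card_le_two (by simp) _)
    (fun _ => not_hasMonoCopyCol_of_card_lt (by simp)) (by simp) (by simp)

theorem gallaiRamsey_lower_of_isGallaiTriangleOrStarFree {t N k : ℕ} (ht : 3 ≤ t)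
    {c : Sym2 (Fin N) → Fin k} (hc : IsGallaiTriangleOrStarFree t c) :
    (∃ c : Sym2 (Fin N) → Fin k, ¬HasRainbowTriangle c ∧ ¬HasMonoCopy (SGraph t 2) c) ∧
      ∀ n : ℕ, (∀ c : Sym2 (Fin n) → Fin k,
        HasRainbowTriangle c ∨ HasMonoCopy (SGraph t 2) c) → N + 1 ≤ n := by
  refine ⟨⟨c, hc.not_hasRainbowTriangle, hc.not_hasMonoCopy ht⟩, fun n hn => ?_⟩
  by_contra! hnN
  have hrestrict := hc.comap (Fin.castLEEmb (Nat.le_of_lt_succ hnN))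
  exact (hn _).elim hrestrict.not_hasRainbowTriangle (hrestrict.not_hasMonoCopy ht)

theorem gallai_ramsey_St2_lower (k t : ℕ) (hk : 1 ≤ k) (ht : 3 ≤ t) :
    (Even k →
      (∃ c : Sym2 (Fin (2 * (t - 1) * 5 ^ ((k - 2) / 2))) → Fin k,
        ¬ HasRainbowTriangle c ∧ ¬ HasMonoCopy (SGraph t 2) c) ∧
      (∀ n : ℕ, (∀ c : Sym2 (Fin n) → Fin k,
          HasRainbowTriangle c ∨ HasMonoCopy (SGraph t 2) c) →
        2 * (t - 1) * 5 ^ ((k - 2) / 2) + 1 ≤ n)) ∧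
    (Odd k →
      (∃ c : Sym2 (Fin ((t - 1) * 5 ^ ((k - 1) / 2))) → Fin k,
        ¬ HasRainbowTriangle c ∧ ¬ HasMonoCopy (SGraph t 2) c) ∧
      (∀ n : ℕ, (∀ c : Sym2 (Fin n) → Fin k,
          HasRainbowTriangle c ∨ HasMonoCopy (SGraph t 2) c) →
        (t - 1) * 5 ^ ((k - 1) / 2) + 1 ≤ n)) := by
  refine ⟨fun hEven => ?_, fun hOdd => ?_⟩
  · obtain ⟨j, rfl⟩ : ∃ j, k = 2 * j + 2 := ⟨(k - 2) / 2, by obtain ⟨r, hr⟩ := hEven; omega⟩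
    obtain ⟨c, hc⟩ := exists_doubled_pentagonal_fin (by omega : 0 < t) j
    rw [show (2 * j + 2 - 2) / 2 = j by omega, mul_assoc]
    exact gallaiRamsey_lower_of_isGallaiTriangleOrStarFree ht hc
  · obtain ⟨j, rfl⟩ := hOdd
    obtain ⟨c, hc⟩ := exists_pentagonal_fin (by omega : 0 < t) j
    rw [show (2 * j + 1 - 1) / 2 = j by omega]
    exact gallaiRamsey_lower_of_isGallaiTriangleOrStarFree ht hc
end

section
/- Let G be an edge-colored complete graph with no monochromatic copy of S_t^r, whose vertex set is partitioned into parts H_1, ..., H_m, each of order at most t - 1, such that all edges between distinct parts are red. Then the total number of vertices of G is at most 2t + r - 1. -/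
/-!
Take any vertex `x` as the centre. All vertices outside the part of `x` are joined to `x` in red,
and there are at least `t + r` of them. List them sorted by part: a part has at most `t - 1`
vertices, so entries at distance `t - 1` in the list lie in different parts and span a red edge.
Pairing positions `j` and `t - 1 + j` gives the `r` triangles, and the positions in between
supply the pendant leaves of a red `S_t^r`.
-/
theorem Fin.ne_of_monotone_of_ncard_fiber_le {β : Type*} [PartialOrder β] {k s : ℕ}
    {g : Fin k → β} (hg : Monotone g) (hfib : ∀ b, {i | g i = b}.ncard ≤ s)
    {i j : Fin k} (hij : (i : ℕ) + s ≤ j) : g i ≠ g j := by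
  intro h
  have hsub : Set.Icc i j ⊆ {l | g l = g i} :=
    fun l hl => le_antisymm (h ▸ hg hl.2) (hg hl.1)
  have hcard := (Set.ncard_le_ncard hsub).trans (hfib (g i))
  rw [← Finset.coe_Icc, Set.ncard_coe_finset, Fin.card_Icc] at hcard
  omega

theorem exists_equiv_fin_monotone_comp {W β : Type*} [Fintype W] [LinearOrder β] (f : W → β) :
    ∃ e : Fin (Fintype.card W) ≃ W, Monotone (f ∘ e) :=
  let e₀ := (Fintype.equivFin W).symm
  ⟨(Tuple.sort (f ∘ e₀)).trans e₀, Tuple.monotone_sort (f ∘ e₀)⟩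

theorem card_compl_fiber_add_ncard_fiber {V β : Type*} [Fintype V] [DecidableEq β]
    (P : V → β) (b : β) :
    Fintype.card {v // P v ≠ b} + {v | P v = b}.ncard = Fintype.card V := by
  rw [Fintype.card_subtype_compl, Set.ncard_eq_toFinset_card', Set.toFinset_card]
  have := Fintype.card_subtype_le fun v => P v = b
  simp only [Set.coe_ofPred]
  omega

/- Leaves `2j + 1` and `2j + 2` of `S_{n+1}^r`, i.e. the `j`-th triangle (`j < min r (n / 2)`),
are sent to positions `j` and `n + j` of a list sorted by part, so they lie in different parts;
the other leaves fill the positions in between. Here `l` is leaf `l + 1`. -/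
def leafIndex (n r l : ℕ) : ℕ :=
  if l < 2 * min r (n / 2) then (if l % 2 = 0 then l / 2 else n + l / 2) else l - min r (n / 2)

theorem leafIndex_lt {n r l : ℕ} (hl : l < n) : leafIndex n r l < n + r := by
  unfold leafIndex; split_ifs <;> omega

theorem leafIndex_injOn (n r : ℕ) : Set.InjOn (leafIndex n r) (Set.Iio n) := by
  intro a ha b hb h
  simp only [Set.mem_Iio] at ha hb
  unfold leafIndex at h; split_ifs at h <;> omega

theorem leafIndex_succ {n r l : ℕ} (hl : l % 2 = 0) (hr : l + 2 ≤ 2 * r) (hn : l + 2 ≤ n) :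
    leafIndex n r (l + 1) = leafIndex n r l + n := by
  unfold leafIndex; split_ifs <;> omega

theorem exists_embedding_SGraph_crossing_parts {V β : Type*} [Finite V] [PartialOrder β]
    {P : V → β} {n k r : ℕ}
    (x : V) (e : Fin k ↪ V) (hx : ∀ i, P (e i) ≠ P x) (he : Monotone (P ∘ e))
    (hfib : ∀ b, {v | P v = b}.ncard ≤ n) (hk : n + r ≤ k) :
    ∃ f : Fin (n + 1) ↪ V, ∀ a b, (SGraph (n + 1) r).Adj a b → P (f a) ≠ P (f b) := by
  let φ : Fin n → Fin k := fun l => ⟨leafIndex n r l, (leafIndex_lt l.2).trans_le hk⟩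
  have hφ : Function.Injective φ := fun a b h =>
    Fin.ext (leafIndex_injOn n r a.2 b.2 (congrArg Fin.val h))
  let f : Fin (n + 1) → V := Fin.cons x (e ∘ φ)
  have hf : Function.Injective f := Fin.cons_injective_iff.mpr
    ⟨fun ⟨l, hl⟩ => hx (φ l) (congrArg P hl), e.injective.comp hφ⟩
  have hfibe : ∀ b, {i | P (e i) = b}.ncard ≤ n := fun b =>
    (Set.ncard_le_ncard_of_injOn e (fun _ hi => hi) e.injective.injOn).trans (hfib b)
  suffices key : ∀ a b : Fin (n + 1), a ≠ b →
      (a.val = 0 ∨ (b.val = a.val + 1 ∧ a.val % 2 = 1 ∧ b.val ≤ 2 * r)) → P (f a) ≠ P (f b) by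
    refine ⟨⟨f, hf⟩, ?_⟩
    rintro a b ⟨hab, h | h⟩
    exacts [key a b hab h, (key b a hab.symm h).symm]
  intro a b hab h
  rcases Fin.eq_zero_or_eq_succ a with rfl | ⟨l, rfl⟩ <;>
    rcases Fin.eq_zero_or_eq_succ b with rfl | ⟨l', rfl⟩
  · exact absurd rfl hab
  · exact (hx (φ l')).symm
  · simp at h
  · simp only [Fin.val_succ] at h
    have hl' : (l' : ℕ) = l + 1 := by omega
    have hsucc := leafIndex_succ (n := n) (r := r) (l := l) (by omega) (by omega) (by omega)
    rw [← hl'] at hsucc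
    exact Fin.ne_of_monotone_of_ncard_fiber_le he hfibe (i := φ l) (j := φ l') hsucc.ge

theorem parts_bound_Str (V : Type*) [Fintype V] (C : Type*)
    (c : Sym2 V → C) (red : C) (t r m : ℕ) (P : V → Fin m)
    (hparts : ∀ i : Fin m, Set.ncard {v : V | P v = i} ≤ t - 1)
    (hred : ∀ u v : V, P u ≠ P v → c s(u, v) = red)
    (hno : ¬ HasMonoCopy (SGraph t r) c) :
    Fintype.card V ≤ 2 * t + r - 1 := by
  by_contra! hcard
  obtain _ | n := t
  · exact hno ⟨⟨Fin.elim0, fun a => a.elim0⟩, red, fun a => a.elim0⟩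
  obtain ⟨x⟩ : Nonempty V := Fintype.card_pos_iff.mp (by omega)
  have hW : n + r ≤ Fintype.card {v // P v ≠ P x} := by
    have := card_compl_fiber_add_ncard_fiber P (P x)
    have := hparts (P x)
    omega
  obtain ⟨e, he⟩ := exists_equiv_fin_monotone_comp fun w : {v // P v ≠ P x} => P w
  obtain ⟨f, hf⟩ := exists_embedding_SGraph_crossing_parts x
    (e.toEmbedding.trans (Function.Embedding.subtype _)) (fun i => (e i).2) he hparts hW
  exact hno ⟨f, red, fun a b hab => hred _ _ (hf a b hab)⟩
end

section
/- Let G be a complete graph on 2t + 2r - 1 vertices whose edges are colored red and blue, with t ≥ 6r - 4. If every vertex has red degree at least t + 2r, then G contains a red copy of S_t^r. -/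
lemma matching_lemma {V : Type*} [DecidableEq V] (c : Sym2 V → Fin 2) :
    ∀ (k : ℕ) (S : Finset V), 2 * k ≤ S.card →
    (∀ u ∈ S, 2 * k - 1 ≤ (S.filter fun w => w ≠ u ∧ c s(u, w) = 0).card) →
    ∃ g : Fin (2 * k) → V, Function.Injective g ∧ (∀ i, g i ∈ S) ∧
      ∀ i : ℕ, (hi : i < k) →
        c s(g ⟨2 * i, by omega⟩, g ⟨2 * i + 1, by omega⟩) = 0 := by
  intro k
  induction k with
  | zero =>
    intro S _ _
    exact ⟨Fin.elim0, fun i => i.elim0, fun i => i.elim0, fun i hi => by omega⟩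
  | succ k ih =>
    intro S hcard hdeg
    obtain ⟨a, ha⟩ := Finset.card_pos.mp (by omega : 0 < S.card)
    have hda := hdeg a ha
    obtain ⟨b, hb⟩ := Finset.card_pos.mp
      (by omega : 0 < (S.filter fun w => w ≠ a ∧ c s(a, w) = 0).card)
    rw [Finset.mem_filter] at hb
    obtain ⟨hbS, hba, hcab⟩ := hb
    set S' := (S.erase a).erase b with hS'
    have haS' : a ∉ S' := by simp [hS', Finset.mem_erase]
    have hbS' : b ∉ S' := by simp [hS']
    have hS'sub : S' ⊆ S := (Finset.erase_subset _ _).trans (Finset.erase_subset _ _)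
    have hcard' : 2 * k ≤ S'.card := by
      rw [hS']
      have h1 := Finset.pred_card_le_card_erase (s := S) (a := a)
      have h2 := Finset.pred_card_le_card_erase (s := S.erase a) (a := b)
      omega
    have hdeg' : ∀ u ∈ S', 2 * k - 1 ≤ (S'.filter fun w => w ≠ u ∧ c s(u, w) = 0).card := by
      intro u huS'
      have hdu := hdeg u (hS'sub huS')
      have hsub : ((S.filter fun w => w ≠ u ∧ c s(u, w) = 0).erase a).erase b ⊆
          S'.filter fun w => w ≠ u ∧ c s(u, w) = 0 := by
        intro x hx
        simp only [Finset.mem_erase, Finset.mem_filter] at hx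
        simp only [hS', Finset.mem_filter, Finset.mem_erase]
        exact ⟨⟨hx.1, hx.2.1, hx.2.2.1⟩, hx.2.2.2⟩
      have hc := Finset.card_le_card hsub
      have h1 := Finset.pred_card_le_card_erase
        (s := S.filter fun w => w ≠ u ∧ c s(u, w) = 0) (a := a)
      have h2 := Finset.pred_card_le_card_erase
        (s := (S.filter fun w => w ≠ u ∧ c s(u, w) = 0).erase a) (a := b)
      omega
    obtain ⟨g', hg'inj, hg'mem, hg'pair⟩ := ih S' hcard' hdeg'
    refine ⟨fun i => if h : i.val < 2 * k then g' ⟨i.val, h⟩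
      else if i.val = 2 * k then a else b, ?_, ?_, ?_⟩
    · intro i j hij
      dsimp only at hij
      split_ifs at hij with h1 h2 h3 h4 h5 h6 h7
      · exact Fin.ext (by simpa using congrArg Fin.val (hg'inj hij))
      · exact absurd (hij ▸ hg'mem _) haS'
      · exact absurd (hij ▸ hg'mem _) hbS'
      · exact absurd (hij ▸ hg'mem _) haS'
      · exact Fin.ext (by omega)
      · exact absurd hij.symm hba
      · exact absurd (hij ▸ hg'mem _) hbS'
      · exact absurd hij hba
      · exact Fin.ext (by omega)
    · intro i
      dsimp only
      split_ifs with h1 h2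
      · exact hS'sub (hg'mem _)
      · exact ha
      · exact hbS
    · intro i hi
      dsimp only
      by_cases hik : i < k
      · rw [dif_pos (by omega : 2 * i < 2 * k), dif_pos (by omega : 2 * i + 1 < 2 * k)]
        exact hg'pair i hik
      · have hieq : i = k := by omega
        subst hieq
        rw [dif_neg (by omega), dif_neg (by omega), if_pos rfl, if_neg (by omega)]
        exact hcab

theorem min_red_degree_Str (t r : ℕ) (hr : 1 ≤ r) (ht : 6 * r - 4 ≤ t)
    (c : Sym2 (Fin (2 * t + 2 * r - 1)) → Fin 2)
    (hdeg : ∀ v : Fin (2 * t + 2 * r - 1),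
      t + 2 * r ≤ (Finset.univ.filter fun u => u ≠ v ∧ c s(v, u) = 0).card) :
    HasMonoCopyCol (SGraph t r) c 0 := by
  have ht2 : 2 ≤ t := by omega
  -- the center vertex
  let v : Fin (2 * t + 2 * r - 1) := ⟨0, by omega⟩
  set N := Finset.univ.filter (fun u => u ≠ v ∧ c s(v, u) = 0) with hN
  have hNcard : t + 2 * r ≤ N.card := hdeg v
  have hvN : v ∉ N := by simp [hN]
  have hmemN : ∀ u ∈ N, u ≠ v ∧ c s(v, u) = 0 := by
    intro u hu
    simpa [hN] using hu
  -- minimum red degree inside N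
  have hmindeg : ∀ u ∈ N, 2 * r - 1 ≤ (N.filter fun w => w ≠ u ∧ c s(u, w) = 0).card := by
    intro u hu
    set R := Finset.univ.filter (fun w => w ≠ u ∧ c s(u, w) = 0) with hR
    have hRcard : t + 2 * r ≤ R.card := hdeg u
    have hint : R ∩ N = N.filter fun w => w ≠ u ∧ c s(u, w) = 0 := by
      ext x
      simp only [hR, Finset.mem_inter, Finset.mem_filter, Finset.mem_univ, true_and]
      tauto
    have h1 : (R ∪ N).card + (R ∩ N).card = R.card + N.card :=
      Finset.card_union_add_card_inter R N
    have h2 : (R ∪ N).card ≤ 2 * t + 2 * r - 1 := by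
      have := Finset.card_le_univ (R ∪ N)
      simpa using this
    rw [hint] at h1
    omega
  -- find a red matching of size r inside N
  obtain ⟨g, hginj, hgmem, hgpair⟩ := matching_lemma c r N (by omega) hmindeg
  set M := Finset.image g Finset.univ with hM
  have hMcard : M.card = 2 * r := by
    rw [hM, Finset.card_image_of_injective _ hginj, Finset.card_univ, Fintype.card_fin]
  have hsdiff : t - 1 - 2 * r ≤ (N \ M).card := by
    have := Finset.le_card_sdiff M N
    omega
  obtain ⟨T, hTsub, hTcard⟩ := Finset.exists_subset_card_eq hsdiff
  let E := T.orderEmbOfFin hTcard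
  have hEmemT : ∀ i, E i ∈ T := fun i => T.orderEmbOfFin_mem hTcard i
  have hEmemN : ∀ i, E i ∈ N := fun i => (Finset.mem_sdiff.mp (hTsub (hEmemT i))).1
  have hEnotM : ∀ i, E i ∉ M := fun i => (Finset.mem_sdiff.mp (hTsub (hEmemT i))).2
  -- build the embedding
  let f : Fin t → Fin (2 * t + 2 * r - 1) := fun j =>
    if h0 : j.val = 0 then v
    else if h1 : j.val ≤ 2 * r then g ⟨j.val - 1, by omega⟩
    else E ⟨j.val - (2 * r + 1), by have := j.2; omega⟩
  have hfN : ∀ j : Fin t, j.val ≠ 0 → f j ∈ N := by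
    intro j hj
    simp only [f, dif_neg hj]
    split_ifs with h1
    · exact hgmem _
    · exact hEmemN _
  have hfinj : Function.Injective f := by
    intro i j hij
    simp only [f] at hij
    split_ifs at hij with h1 h2 h3 h4 h5 h6 h7 h8
    · exact Fin.ext (by omega)
    · exact absurd ((hmemN _ (hgmem _)).1 hij.symm) (by simp)
    · exact absurd ((hmemN _ (hEmemN _)).1 hij.symm) (by simp)
    · exact absurd ((hmemN _ (hgmem _)).1 hij) (by simp)
    · have := hginj hij
      have := congrArg Fin.val this
      exact Fin.ext (by simp at this; omega)
    · exact absurd (hij ▸ Finset.mem_image_of_mem g (Finset.mem_univ _)) (hEnotM _)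
    · exact absurd ((hmemN _ (hEmemN _)).1 hij) (by simp)
    · exact absurd (hij.symm ▸ Finset.mem_image_of_mem g (Finset.mem_univ _)) (hEnotM _)
    · have := E.injective hij
      have := congrArg Fin.val this
      exact Fin.ext (by simp at this; omega)
  -- the matching edges
  have hmatch : ∀ a b : Fin t,
      b.val = a.val + 1 → a.val % 2 = 1 → b.val ≤ 2 * r → c s(f a, f b) = 0 := by
    intro a b hab haodd hble
    have ha0 : a.val ≠ 0 := by omega
    have hb0 : b.val ≠ 0 := by omega
    have hale : a.val ≤ 2 * r := by omega
    set m := a.val / 2 with hm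
    have hmr : m < r := by omega
    have h2m : a.val - 1 = 2 * m := by omega
    have h2m1 : b.val - 1 = 2 * m + 1 := by omega
    simp only [f, dif_neg ha0, dif_pos hale, dif_neg hb0, dif_pos hble, h2m, h2m1]
    exact hgpair m hmr
  refine ⟨⟨f, hfinj⟩, ?_⟩
  intro a b hadj
  show c s(f a, f b) = 0
  rw [SGraph, SimpleGraph.fromRel_adj] at hadj
  obtain ⟨hne, hrel⟩ := hadj
  have hfv : ∀ x : Fin t, x.val = 0 → f x = v := by
    intro x hx
    simp [f, hx]
  rcases hrel with (h0 | ⟨hab, haodd, hble⟩) | (h0 | ⟨hab, haodd, hble⟩)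
  · rw [hfv a h0]
    have hb0 : b.val ≠ 0 := fun h => hne (Fin.ext (by omega))
    exact (hmemN _ (hfN b hb0)).2
  · exact hmatch a b hab haodd hble
  · rw [hfv b h0, Sym2.eq_swap]
    have ha0 : a.val ≠ 0 := fun h => hne (Fin.ext (by omega))
    exact (hmemN _ (hfN a ha0)).2
  · rw [Sym2.eq_swap]
    exact hmatch b a hab haodd hble
end
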